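/- arXiv:2405.18895 — 15 statements merged into one kernel-verified Lean document; each statement's English description precedes it below -/
import Mathlib

section
/- Let m, n be natural numbers and suppose that every coefficient a_j (0 ≤ j ≤ m+n) of the polynomial P_{m,n} = (X−1)^m(X+1)^n is nonzero. Then for any positive real numbers α_1, …, α_m and β_1, …, β_n there exists ε_0 > 0 such that for every ε with 0 < ε < ε_0, the polynomial Q_ε := ∏_{i=1}^m (X − (1+ε α_i)) · ∏_{j=1}^n (X + (1+ε β_j)) satisfies: for every 0 ≤ j ≤ m+n, the coefficient of X^j in Q_ε is nonzero and has the same sign as a_j. (This is the key step showing that the sign pattern of P_{m,n} is universal, since the roots 1+ε α_i and −(1+ε β_j) of Q_ε realize any prescribed order of moduli.) -/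
open Polynomial

lemma cont_coeff_prod {ι : Type*} (s : Finset ι) (f : ι → ℝ → ℝ[X])
    (hf : ∀ i ∈ s, ∀ k, Continuous fun ε => (f i ε).coeff k) :
    ∀ k, Continuous fun ε => (∏ i ∈ s, f i ε).coeff k := by
  induction s using Finset.cons_induction with
  | empty =>
    intro k
    simp only [Finset.prod_empty, Polynomial.coeff_one]
    exact continuous_const
  | cons a s ha ih =>
    intro k
    simp only [Finset.prod_cons, Polynomial.coeff_mul]
    exact continuous_finset_sum _ fun p _ =>
      (hf a (Finset.mem_cons_self a s) p.1).mul
        (ih (fun i hi k => hf i (Finset.mem_cons_of_mem hi) k) p.2)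

/-- If all coefficients of `P_{m,n} = (X-1)^m (X+1)^n` are nonzero, then for any positive
`α_i`, `β_j` there is `ε₀ > 0` such that for `0 < ε < ε₀` the polynomial
`∏ (X - (1+ε α_i)) * ∏ (X + (1+ε β_j))` has all coefficients nonzero and of the same sign
as the corresponding coefficient of `P_{m,n}`. -/
theorem universal_sign_pattern_key_step (m n : ℕ)
    (h : ∀ j ≤ m + n, ((X - 1) ^ m * (X + 1) ^ n : ℝ[X]).coeff j ≠ 0)
    (α : Fin m → ℝ) (β : Fin n → ℝ)
    (hα : ∀ i, 0 < α i) (hβ : ∀ i, 0 < β i) :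
    ∃ ε₀ > (0 : ℝ), ∀ ε : ℝ, 0 < ε → ε < ε₀ → ∀ j ≤ m + n,
      ((∏ i, (X - C (1 + ε * α i))) * ∏ i, (X + C (1 + ε * β i)) : ℝ[X]).coeff j ≠ 0 ∧
      0 < ((∏ i, (X - C (1 + ε * α i))) * ∏ i, (X + C (1 + ε * β i)) : ℝ[X]).coeff j *
          ((X - 1) ^ m * (X + 1) ^ n : ℝ[X]).coeff j := by
  set P : ℝ[X] := (X - 1) ^ m * (X + 1) ^ n with hP
  set Q : ℝ → ℝ[X] := fun ε => (∏ i, (X - C (1 + ε * α i))) * ∏ i, (X + C (1 + ε * β i))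
    with hQ
  have hcontA : ∀ k, Continuous fun ε : ℝ => ((∏ i, (X - C (1 + ε * α i)) : ℝ[X])).coeff k := by
    apply cont_coeff_prod
    intro i _ k
    simp only [coeff_sub, coeff_C]
    split_ifs <;> fun_prop
  have hcontB : ∀ k, Continuous fun ε : ℝ => ((∏ i, (X + C (1 + ε * β i)) : ℝ[X])).coeff k := by
    apply cont_coeff_prod
    intro i _ k
    simp only [coeff_add, coeff_C]
    split_ifs <;> fun_prop
  have hcont : ∀ k, Continuous fun ε : ℝ => (Q ε).coeff k := by
    intro k
    simp only [hQ, Polynomial.coeff_mul]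
    exact continuous_finset_sum _ fun p _ => (hcontA p.1).mul (hcontB p.2)
  have h0 : Q 0 = P := by
    simp [hQ, hP, Finset.prod_const, sub_eq_add_neg]
  have key : ∀ᶠ ε in nhds (0 : ℝ), ∀ j ∈ Finset.range (m + n + 1),
      0 < (Q ε).coeff j * P.coeff j := by
    rw [Filter.eventually_all_finset]
    intro j hj
    have hj' : j ≤ m + n := Nat.lt_succ_iff.mp (Finset.mem_range.mp hj)
    have hc : Continuous fun ε => (Q ε).coeff j * P.coeff j := (hcont j).mul continuous_const
    have h0' : 0 < (Q 0).coeff j * P.coeff j := by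
      rw [h0]; exact mul_self_pos.mpr (h j hj')
    exact (isOpen_lt continuous_const hc).mem_nhds h0'
  rw [Metric.eventually_nhds_iff] at key
  obtain ⟨ε₀, hε₀, hkey⟩ := key
  refine ⟨ε₀, hε₀, fun ε hε hεlt j hj => ?_⟩
  have hdist : dist ε 0 < ε₀ := by
    simp [Real.dist_eq, abs_of_pos hε, hεlt]
  have hpos := hkey hdist j (Finset.mem_range.mpr (Nat.lt_succ_of_le hj))
  refine ⟨fun hz => ?_, hpos⟩
  rw [hz] at hpos
  simp at hpos
end

section
/- For every natural number m ≥ 1 and every k with 0 ≤ k ≤ 2m+1, the coefficient of X^{2m+1−k} in the polynomial P_{m,m+1} = (X−1)^m(X+1)^{m+1} is nonzero and its sign equals (−1)^{⌊k/2⌋}. In other words, the sign pattern of P_{m,m+1}, read from the leading coefficient, consists of m+1 consecutive pairs of equal signs with alternating signs between consecutive pairs: (+,+,−,−,+,+,−,−,…). -/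
open Polynomial
section aux
open Finset

lemma hSsum (m : ℕ) : (((X:ℝ[X])^2 - 1)^m) =
    ∑ i ∈ range (m+1), C ((-1:ℝ)^(m-i) * m.choose i) * X^(2*i) := by
  rw [sub_eq_add_neg, add_pow]
  refine Finset.sum_congr rfl fun i hi => ?_
  simp [map_mul, map_pow, map_natCast, ← pow_mul]
  ring

lemma coeff_even (m i : ℕ) (hi : i ≤ m) :
    (((X:ℝ[X])^2 - 1)^m).coeff (2*i) = (-1:ℝ)^(m-i) * m.choose i := by
  rw [hSsum, finset_sum_coeff]
  rw [Finset.sum_eq_single i]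
  · simpa [coeff_zero_eq_eval_zero] using coeff_mul_X_pow (C ((-1:ℝ)^(m-i) * m.choose i)) (2*i) 0
  · intro b _ hb
    simp only [coeff_C_mul, coeff_X_pow]
    rw [if_neg (by omega)]; ring
  · intro h; exact absurd (mem_range.mpr (by omega)) h

lemma coeff_odd (m i : ℕ) :
    (((X:ℝ[X])^2 - 1)^m).coeff (2*i+1) = 0 := by
  rw [hSsum, finset_sum_coeff]
  refine Finset.sum_eq_zero fun b _ => ?_
  simp only [coeff_C_mul, coeff_X_pow]
  rw [if_neg (by omega)]; ring

lemma key_coeff (m k : ℕ) (hk : k ≤ 2 * m + 1) :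
    ((X - 1) ^ m * (X + 1) ^ (m + 1) : ℝ[X]).coeff (2 * m + 1 - k) =
      (-1:ℝ)^(k/2) * (m.choose (m - k/2)) := by
  have hfac : ((X - 1) ^ m * (X + 1) ^ (m + 1) : ℝ[X]) = (X + 1) * ((X^2 - 1)^m) := by
    have h1 : ((X:ℝ[X])^2 - 1) = (X - 1) * (X + 1) := by ring
    rw [h1, mul_pow, pow_succ]; ring
  rw [hfac]
  have expand : ∀ t : ℕ, ((X + 1) * ((X^2 - 1)^m) : ℝ[X]).coeff (t+1) =
      (((X:ℝ[X])^2 - 1)^m).coeff t + (((X:ℝ[X])^2 - 1)^m).coeff (t+1) := by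
    intro t
    rw [add_mul, one_mul, coeff_add, coeff_X_mul]
  rcases eq_or_lt_of_le hk with heq | hlt
  · -- k = 2m+1, index 0
    subst heq
    rw [Nat.sub_self, mul_coeff_zero]
    have h0 : (((X:ℝ[X])^2 - 1)^m).coeff 0 = (-1:ℝ)^m := by
      simpa using coeff_even m 0 (Nat.zero_le m)
    have hdiv : (2*m+1)/2 = m := by omega
    simp [h0, hdiv]
  · rcases Nat.even_or_odd k with ⟨s, hs⟩ | ⟨s, hs⟩
    · -- k = 2s, index = 2(m-s)+1
      have hsm : s ≤ m := by omega
      have hidx : 2*m+1-k = 2*(m-s)+1 := by omega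
      have hd : k/2 = s := by omega
      rw [hidx, expand, coeff_odd, coeff_even m (m-s) (by omega), add_zero, hd]
      congr 2
      omega
    · -- k = 2s+1 < 2m+1, so s < m; index = 2(m-s) = (2(m-s-1)+1)+1
      have hsm : s < m := by omega
      have hidx : 2*m+1-k = (2*(m-s-1)+1)+1 := by omega
      have hd : k/2 = s := by omega
      rw [hidx, expand, coeff_odd]
      have h2 : 2*(m-s-1)+1+1 = 2*(m-s) := by omega
      rw [h2, coeff_even m (m-s) (by omega), zero_add, hd]
      congr 2
      omega

end aux

/-- For `m ≥ 1` and `0 ≤ k ≤ 2m+1`, the coefficient of `X^(2m+1-k)` in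
`P_{m,m+1} = (X-1)^m (X+1)^(m+1)` is nonzero with sign `(-1)^⌊k/2⌋`. -/
theorem sign_pattern_P_m_m_add_one (m : ℕ) (hm : 1 ≤ m) (k : ℕ) (hk : k ≤ 2 * m + 1) :
    ((X - 1) ^ m * (X + 1) ^ (m + 1) : ℝ[X]).coeff (2 * m + 1 - k) ≠ 0 ∧
    Real.sign (((X - 1) ^ m * (X + 1) ^ (m + 1) : ℝ[X]).coeff (2 * m + 1 - k)) =
      (-1 : ℝ) ^ (k / 2) := by
  have key := key_coeff m k hk
  have hpos : (0:ℝ) < m.choose (m - k/2) := by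
    exact_mod_cast Nat.choose_pos (by omega)
  rw [key]
  rcases Nat.even_or_odd (k/2) with he | ho
  · rw [he.neg_one_pow, one_mul]
    exact ⟨ne_of_gt hpos, Real.sign_of_pos hpos⟩
  · rw [ho.neg_one_pow, neg_one_mul]
    refine ⟨neg_ne_zero.mpr (ne_of_gt hpos), ?_⟩
    exact Real.sign_of_neg (neg_lt_zero.mpr hpos)
end

section
/- Let m be an even natural number. Then for every j with 0 ≤ j ≤ 2m+2, the coefficient a_j of P_{m,m+2} = (X−1)^m(X+1)^{m+2} is nonzero and its sign equals (−1)^{m/2 + ⌊|j−(m+1)|/2⌋}. Equivalently, the sign pattern of P_{m,m+2}, read from the leading coefficient, consists of m/2 pairs of equal signs, then a triple of equal signs in the middle, then m/2 pairs of equal signs, consecutive blocks having opposite signs (the pattern Σ_{2,…,2,3,2,…,2}). -/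
/-!
For even `m`, `(X - 1)^m = (1 - X)^m`, so `P_{m,m+2} = (1 - X²)^m (1 + X)²`. Splitting off the even
and odd parts, with `c_i = (-1)^i (m choose i)` the coefficients of `(1 - X)^m`, gives
`a_{2i+1} = 2 c_i` and `a_{2i} = c_i + c_{i-1} = (-1)^i ((m choose i) - (m choose (i-1)))`.
The odd coefficients therefore alternate, and the sign of the even ones is read off from the
strict unimodality of `i ↦ m choose i`, which increases up to `m / 2` and decreases after it.
-/

open Polynomial

theorem Nat.choose_lt_choose_succ {n i : ℕ} (h : 2 * i + 1 < n) :
    n.choose i < n.choose (i + 1) := by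
  refine Nat.lt_of_mul_lt_mul_right (a := i + 1) ?_
  rw [Nat.choose_succ_right_eq]
  exact Nat.mul_lt_mul_of_pos_left (by omega) (Nat.choose_pos (by omega))

theorem Nat.choose_succ_lt_choose {n i : ℕ} (hi : i ≤ n) (h : n < 2 * i + 1) :
    n.choose (i + 1) < n.choose i := by
  refine Nat.lt_of_mul_lt_mul_right (a := i + 1) ?_
  rw [Nat.choose_succ_right_eq]
  exact Nat.mul_lt_mul_of_pos_left (by omega) (Nat.choose_pos hi)

theorem Real.ne_zero_and_sign_eq_neg_one_pow {a c : ℝ} {e n : ℕ} (ha : a = (-1) ^ e * c)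
    (hc : 0 < c) (hen : e % 2 = n % 2) : a ≠ 0 ∧ Real.sign a = (-1) ^ n := by
  rw [ha, neg_one_pow_congr (by simp [Nat.even_iff, hen] : Even e ↔ Even n)]
  rcases neg_one_pow_eq_or ℝ n with h | h <;> rw [h]
  · simp [hc.ne', Real.sign_of_pos hc]
  · simp [hc.ne', Real.sign_of_neg (neg_neg_of_pos hc)]

namespace Polynomial

variable {R : Type*} [CommRing R]

theorem coeff_one_sub_X_pow (m i : ℕ) :
    ((1 - X : R[X]) ^ m).coeff i = (-1) ^ i * m.choose i := by
  rw [show (1 - X : R[X]) = C (-1) * (X + C (-1)) by simp; ring, mul_pow, ← C_pow, coeff_C_mul,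
    coeff_X_add_C_pow, ← mul_assoc, ← pow_add]
  rcases le_or_gt i m with hi | hi
  · exact congrArg (· * _) (neg_one_pow_congr (by rw [Nat.even_add, Nat.even_sub hi]; tauto))
  · simp [Nat.choose_eq_zero_of_lt hi]

theorem coeff_expand_two_add_X_mul_expand_two_two_mul (f g : R[X]) (i : ℕ) :
    (expand R 2 f + X * expand R 2 g).coeff (2 * i) = f.coeff i := by
  rw [coeff_add, coeff_expand_mul' two_pos]
  rcases i with _ | i
  · rw [coeff_X_mul_zero, add_zero]
  · rw [show 2 * (i + 1) = 2 * i + 1 + 1 by ring, coeff_X_mul, coeff_expand two_pos,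
      if_neg (by omega), add_zero]

theorem coeff_expand_two_add_X_mul_expand_two_two_mul_add_one (f g : R[X]) (i : ℕ) :
    (expand R 2 f + X * expand R 2 g).coeff (2 * i + 1) = g.coeff i := by
  rw [coeff_add, coeff_X_mul, coeff_expand_mul' two_pos, coeff_expand two_pos, if_neg (by omega),
    zero_add]

theorem X_sub_one_pow_mul_X_add_one_pow_add_two_of_even {m : ℕ} (hm : Even m) :
    ((X - 1) ^ m * (X + 1) ^ (m + 2) : R[X]) =
      expand R 2 ((1 - X) ^ m * (1 + X)) + X * expand R 2 (2 * (1 - X) ^ m) := by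
  have h : (1 - X ^ 2 : R[X]) = (1 - X) * (1 + X) := by ring
  simp only [map_mul, map_pow, map_sub, map_add, map_one, map_ofNat, expand_X, h, mul_pow]
  rw [← neg_sub, hm.neg_pow]
  ring

theorem coeff_one_sub_X_pow_mul_one_add_X_succ (m i : ℕ) :
    ((1 - X : R[X]) ^ m * (1 + X)).coeff (i + 1) =
      (-1) ^ (i + 1) * ((m.choose (i + 1) : R) - m.choose i) := by
  rw [mul_add, mul_one, coeff_add, coeff_mul_X, coeff_one_sub_X_pow, coeff_one_sub_X_pow]
  ring

end Polynomial

/-- For `m` even and `0 ≤ j ≤ 2m+2`, the coefficient of `X^j` in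
`P_{m,m+2} = (X-1)^m (X+1)^(m+2)` is nonzero with sign `(-1)^(m/2 + ⌊|j-(m+1)|/2⌋)`. -/
theorem sign_pattern_P_m_m_add_two_even (m : ℕ) (hm : Even m) (j : ℕ) (hj : j ≤ 2 * m + 2) :
    ((X - 1) ^ m * (X + 1) ^ (m + 2) : ℝ[X]).coeff j ≠ 0 ∧
    Real.sign (((X - 1) ^ m * (X + 1) ^ (m + 2) : ℝ[X]).coeff j) =
      (-1 : ℝ) ^ (m / 2 + ((j : ℤ) - ((m : ℤ) + 1)).natAbs / 2) := by
  rw [X_sub_one_pow_mul_X_add_one_pow_add_two_of_even hm]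
  obtain ⟨k, rfl⟩ := hm
  obtain ⟨i, rfl | rfl⟩ := Nat.even_or_odd' j
  · rw [coeff_expand_two_add_X_mul_expand_two_two_mul]
    rcases i with _ | i
    · exact Real.ne_zero_and_sign_eq_neg_one_pow (e := 0) (by simp [coeff_one_sub_X_pow]) one_pos
        (by omega)
    rw [coeff_one_sub_X_pow_mul_one_add_X_succ]
    rcases lt_or_ge i k with hik | hik
    · exact Real.ne_zero_and_sign_eq_neg_one_pow rfl
        (sub_pos.2 (mod_cast Nat.choose_lt_choose_succ (by omega))) (by omega)
    · have hlt := Nat.choose_succ_lt_choose (n := k + k) (i := i) (by omega) (by omega)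
      exact Real.ne_zero_and_sign_eq_neg_one_pow
        (c := ((k + k).choose i : ℝ) - (k + k).choose (i + 1)) (by ring) (sub_pos.2 (mod_cast hlt))
        (by omega)
  · rw [coeff_expand_two_add_X_mul_expand_two_two_mul_add_one, coeff_ofNat_mul,
      coeff_one_sub_X_pow]
    have hpos : 0 < (k + k).choose i := Nat.choose_pos (by omega)
    exact Real.ne_zero_and_sign_eq_neg_one_pow (c := 2 * (k + k).choose i) (by ring) (by positivity)
      (by omega)
end

section
/- Let m be an odd natural number and let a_j denote the coefficient of X^j in P_{m,m+2} = (X−1)^m(X+1)^{m+2}. Then: (i) a_{m+1} = 0; (ii) for every k with 0 ≤ k ≤ m, the coefficient a_{2m+2−k} is nonzero and its sign equals (−1)^{⌊k/2⌋}; (iii) a_j = −a_{2m+2−j} for all 0 ≤ j ≤ 2m+2. In particular the generalized sign pattern of P_{m,m+2} consists of (m+1)/2 pairs of equal signs (consecutive pairs having opposite signs), one 0 in the middle, and again (m+1)/2 pairs of equal signs. -/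
open Polynomial

lemma Qcoeff (m n : ℕ) :
    ((X ^ 2 - 1 : ℝ[X]) ^ m).coeff n =
      if n % 2 = 0 ∧ n / 2 ≤ m then (-1 : ℝ) ^ (m - n / 2) * (m.choose (n / 2)) else 0 := by
  have h : (X ^ 2 - 1 : ℝ[X]) ^ m
      = ∑ i ∈ Finset.range (m + 1), C ((-1 : ℝ) ^ (m - i) * m.choose i) * X ^ (2 * i) := by
    rw [sub_eq_add_neg, add_pow]
    refine Finset.sum_congr rfl fun i hi => ?_
    rw [← pow_mul]
    simp [C_mul, C_pow, mul_comm, mul_assoc, mul_left_comm]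
  rw [h, finset_sum_coeff]
  simp only [coeff_C_mul, coeff_X_pow]
  by_cases hc : n % 2 = 0 ∧ n / 2 ≤ m
  · rw [Finset.sum_eq_single (n / 2)]
    · rw [if_pos hc, if_pos (by omega)]
      ring
    · intro b _ hb
      rw [if_neg (by omega), mul_zero]
    · intro h'
      exact absurd (Finset.mem_range.mpr (by omega)) h'
  · rw [if_neg hc]
    refine Finset.sum_eq_zero fun i hi => ?_
    rw [if_neg (by simp at hi; omega), mul_zero]

lemma Pdecomp (m : ℕ) :
    ((X - 1) ^ m * (X + 1) ^ (m + 2) : ℝ[X]) =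
      (X ^ 2 - 1) ^ m * X ^ 2 + 2 * ((X ^ 2 - 1) ^ m * X) + (X ^ 2 - 1) ^ m := by
  have h1 : ((X - 1) * (X + 1) : ℝ[X]) = X ^ 2 - 1 := by ring
  calc ((X - 1) ^ m * (X + 1) ^ (m + 2) : ℝ[X])
      = ((X - 1) * (X + 1)) ^ m * (X + 1) ^ 2 := by rw [mul_pow]; ring
    _ = _ := by rw [h1]; ring

lemma Pcoeff (m d : ℕ) :
    ((X - 1) ^ m * (X + 1) ^ (m + 2) : ℝ[X]).coeff (d + 2) =
      ((X ^ 2 - 1 : ℝ[X]) ^ m).coeff d + 2 * ((X ^ 2 - 1 : ℝ[X]) ^ m).coeff (d + 1)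
        + ((X ^ 2 - 1 : ℝ[X]) ^ m).coeff (d + 2) := by
  rw [Pdecomp]
  have h2 : (((X ^ 2 - 1 : ℝ[X]) ^ m) * X ^ 2).coeff (d + 2)
      = ((X ^ 2 - 1 : ℝ[X]) ^ m).coeff d := coeff_mul_X_pow _ 2 d
  have h1 : (((X ^ 2 - 1 : ℝ[X]) ^ m) * X).coeff (d + 2)
      = ((X ^ 2 - 1 : ℝ[X]) ^ m).coeff (d + 1) := coeff_mul_X _ _
  simp only [coeff_add, h2, coeff_ofNat_mul, h1]

lemma reflect_pow_of_deg_le_one (p : ℝ[X]) (hp : p.natDegree ≤ 1) (n : ℕ) :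
    reflect n (p ^ n) = (reflect 1 p) ^ n := by
  induction n with
  | zero => simp [reflect_one]
  | succ n ih =>
      have hd : (p ^ n).natDegree ≤ n :=
        le_trans (natDegree_pow_le) (by nlinarith)
      calc reflect (n + 1) (p ^ (n + 1)) = reflect (n + 1) (p ^ n * p) := by rw [pow_succ]
        _ = reflect n (p ^ n) * reflect 1 p := reflect_mul _ _ hd hp
        _ = _ := by rw [ih, pow_succ]

lemma Prefl (m : ℕ) (hm : Odd m) {j : ℕ} (hj : j ≤ 2 * m + 2) :
    ((X - 1) ^ m * (X + 1) ^ (m + 2) : ℝ[X]).coeff j =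
      -((X - 1) ^ m * (X + 1) ^ (m + 2) : ℝ[X]).coeff (2 * m + 2 - j) := by
  have hX1 : ((X - 1 : ℝ[X])).natDegree ≤ 1 := by
    simpa using natDegree_X_sub_C_le (1 : ℝ)
  have hX2 : ((X + 1 : ℝ[X])).natDegree ≤ 1 := by
    have := natDegree_X_sub_C_le (-1 : ℝ)
    simpa [sub_neg_eq_add] using this
  have hr1 : reflect 1 (X - 1 : ℝ[X]) = 1 - X := by
    rw [sub_eq_add_neg, reflect_add, reflect_neg]
    simp [reflect_one, sub_eq_add_neg]
  have hr2 : reflect 1 (X + 1 : ℝ[X]) = 1 + X := by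
    rw [reflect_add]
    simp [reflect_one, add_comm]
  have key : reflect (2 * m + 2) ((X - 1) ^ m * (X + 1) ^ (m + 2) : ℝ[X])
      = -((X - 1) ^ m * (X + 1) ^ (m + 2)) := by
    have hd1 : ((X - 1 : ℝ[X]) ^ m).natDegree ≤ m :=
      le_trans natDegree_pow_le (by nlinarith)
    have hd2 : ((X + 1 : ℝ[X]) ^ (m + 2)).natDegree ≤ m + 2 :=
      le_trans natDegree_pow_le (by nlinarith)
    have h0 : (2 * m + 2) = m + (m + 2) := by ring
    rw [h0, reflect_mul _ _ hd1 hd2,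
      reflect_pow_of_deg_le_one _ hX1, reflect_pow_of_deg_le_one _ hX2, hr1, hr2]
    have h1 : ((1 - X : ℝ[X])) ^ m = (-1) ^ m * (X - 1) ^ m := by
      rw [← neg_pow]; ring_nf
    rw [h1, hm.neg_one_pow]
    have h2 : ((1 + X : ℝ[X])) ^ (m + 2) = (X + 1) ^ (m + 2) := by ring_nf
    rw [h2]; ring
  have := coeff_reflect (2 * m + 2) ((X - 1) ^ m * (X + 1) ^ (m + 2) : ℝ[X]) j
  rw [key, revAt_le hj, coeff_neg] at this
  linarith

lemma sign_neg_one_pow_mul (s : ℕ) {c : ℝ} (hc : 0 < c) :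
    ((-1:ℝ)^s * c ≠ 0) ∧ Real.sign ((-1:ℝ)^s * c) = (-1)^s := by
  rcases Nat.even_or_odd s with h | h
  · rw [h.neg_one_pow, one_mul]
    exact ⟨ne_of_gt hc, Real.sign_of_pos hc⟩
  · rw [h.neg_one_pow, neg_one_mul]
    exact ⟨by simpa using ne_of_gt hc, Real.sign_of_neg (by linarith)⟩

lemma choose_strict (m s : ℕ) (hs : 1 ≤ s) (h : 2 * s ≤ m - 1) (hm : 1 ≤ m) :
    m.choose (s - 1) < m.choose s := by
  obtain ⟨t, rfl⟩ : ∃ t, s = t + 1 := ⟨s - 1, by omega⟩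
  have key : m.choose (t + 1) * (t + 1) = m.choose t * (m - t) :=
    Nat.choose_succ_right_eq m t
  have hpos : 0 < m.choose t := Nat.choose_pos (by omega)
  have ht : t + 2 ≤ m - t := by omega
  simp only [Nat.add_sub_cancel]
  nlinarith [Nat.mul_le_mul_left (m.choose t) ht]

/-- For `m` odd, in `P_{m,m+2} = (X-1)^m (X+1)^(m+2)`: (i) the middle coefficient (of
`X^(m+1)`) vanishes; (ii) for `0 ≤ k ≤ m` the coefficient of `X^(2m+2-k)` is nonzero with
sign `(-1)^⌊k/2⌋`; (iii) `a_j = -a_{2m+2-j}` for all `0 ≤ j ≤ 2m+2`. -/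
theorem sign_pattern_P_m_m_add_two_odd (m : ℕ) (hm : Odd m) :
    ((X - 1) ^ m * (X + 1) ^ (m + 2) : ℝ[X]).coeff (m + 1) = 0 ∧
    (∀ k ≤ m,
      ((X - 1) ^ m * (X + 1) ^ (m + 2) : ℝ[X]).coeff (2 * m + 2 - k) ≠ 0 ∧
      Real.sign (((X - 1) ^ m * (X + 1) ^ (m + 2) : ℝ[X]).coeff (2 * m + 2 - k)) =
        (-1 : ℝ) ^ (k / 2)) ∧
    (∀ j ≤ 2 * m + 2,
      ((X - 1) ^ m * (X + 1) ^ (m + 2) : ℝ[X]).coeff j =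
        -((X - 1) ^ m * (X + 1) ^ (m + 2) : ℝ[X]).coeff (2 * m + 2 - j)) := by
  obtain ⟨t, ht⟩ := hm
  have hm1 : 1 ≤ m := by omega
  refine ⟨?_, ?_, fun j hj => Prefl m ⟨t, ht⟩ hj⟩
  · have h := Prefl m ⟨t, ht⟩ (j := m + 1) (by omega)
    have h2 : 2 * m + 2 - (m + 1) = m + 1 := by omega
    rw [h2] at h
    linarith
  · intro k hk
    rcases Nat.even_or_odd k with he | ho
    · obtain ⟨s, rfl⟩ := he
      have hdiv : (s + s) / 2 = s := by omega
      rcases Nat.eq_zero_or_pos s with rfl | hs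
      · -- k = 0 : leading coefficient 1
        have hidx : 2 * m + 2 - (0 + 0) = (2 * m) + 2 := by omega
        have q1 : ((X ^ 2 - 1 : ℝ[X]) ^ m).coeff (2 * m) = 1 := by
          have h2 : (2 * m) / 2 = m := by omega
          rw [Qcoeff, if_pos ⟨by omega, by omega⟩, h2]
          simp
        have q2 : ((X ^ 2 - 1 : ℝ[X]) ^ m).coeff (2 * m + 1) = 0 := by
          rw [Qcoeff, if_neg (by omega)]
        have q3 : ((X ^ 2 - 1 : ℝ[X]) ^ m).coeff (2 * m + 2) = 0 := by
          rw [Qcoeff, if_neg (by omega)]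
        have hval : ((X - 1) ^ m * (X + 1) ^ (m + 2) : ℝ[X]).coeff (2 * m + 2 - (0 + 0))
            = 1 := by
          rw [hidx, Pcoeff, q1, q2, q3]; ring
        rw [hval]
        norm_num [Real.sign_one]
      · -- k = 2s, s ≥ 1
        have hidx : 2 * m + 2 - (s + s) = (2 * m - (s + s)) + 2 := by omega
        have hsm : 2 * s ≤ m - 1 := by omega
        have q1 : ((X ^ 2 - 1 : ℝ[X]) ^ m).coeff (2 * m - (s + s))
            = (-1 : ℝ) ^ s * (m.choose s) := by
          have h2 : (2 * m - (s + s)) / 2 = m - s := by omega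
          have h3 : m - (m - s) = s := by omega
          rw [Qcoeff, if_pos ⟨by omega, by omega⟩, h2,
            Nat.choose_symm (by omega : s ≤ m), h3]
        have q2 : ((X ^ 2 - 1 : ℝ[X]) ^ m).coeff (2 * m - (s + s) + 1) = 0 := by
          rw [Qcoeff, if_neg (by omega)]
        have q3 : ((X ^ 2 - 1 : ℝ[X]) ^ m).coeff (2 * m - (s + s) + 2)
            = (-1 : ℝ) ^ (s - 1) * (m.choose (s - 1)) := by
          have h2 : (2 * m - (s + s) + 2) / 2 = m - (s - 1) := by omega
          have h3 : m - (m - (s - 1)) = s - 1 := by omega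
          rw [Qcoeff, if_pos ⟨by omega, by omega⟩, h2,
            Nat.choose_symm (by omega : s - 1 ≤ m), h3]
        have hneg : (-1 : ℝ) ^ (s - 1) = (-1) ^ s * (-1) := by
          obtain ⟨u, rfl⟩ : ∃ u, s = u + 1 := ⟨s - 1, by omega⟩
          simp [pow_succ]
        have hval : ((X - 1) ^ m * (X + 1) ^ (m + 2) : ℝ[X]).coeff (2 * m + 2 - (s + s))
            = (-1 : ℝ) ^ s * ((m.choose s : ℝ) - (m.choose (s - 1) : ℝ)) := by
          rw [hidx, Pcoeff, q1, q2, q3, hneg]; ring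
        have hc : (0 : ℝ) < (m.choose s : ℝ) - (m.choose (s - 1) : ℝ) := by
          have := choose_strict m s hs hsm hm1
          have h' : (m.choose (s - 1) : ℝ) < (m.choose s : ℝ) := by exact_mod_cast this
          linarith
        rw [hval, hdiv]
        exact sign_neg_one_pow_mul s hc
    · obtain ⟨s, rfl⟩ := ho
      have hdiv : (2 * s + 1) / 2 = s := by omega
      have hidx : 2 * m + 2 - (2 * s + 1) = (2 * m - 1 - 2 * s) + 2 := by omega
      have q1 : ((X ^ 2 - 1 : ℝ[X]) ^ m).coeff (2 * m - 1 - 2 * s) = 0 := by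
        rw [Qcoeff, if_neg (by omega)]
      have q2 : ((X ^ 2 - 1 : ℝ[X]) ^ m).coeff (2 * m - 1 - 2 * s + 1)
          = (-1 : ℝ) ^ s * (m.choose s) := by
        have h2 : (2 * m - 1 - 2 * s + 1) / 2 = m - s := by omega
        have h3 : m - (m - s) = s := by omega
        rw [Qcoeff, if_pos ⟨by omega, by omega⟩, h2,
          Nat.choose_symm (by omega : s ≤ m), h3]
      have q3 : ((X ^ 2 - 1 : ℝ[X]) ^ m).coeff (2 * m - 1 - 2 * s + 2) = 0 := by
        rw [Qcoeff, if_neg (by omega)]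
      have hval : ((X - 1) ^ m * (X + 1) ^ (m + 2) : ℝ[X]).coeff (2 * m + 2 - (2 * s + 1))
          = (-1 : ℝ) ^ s * (2 * (m.choose s : ℝ)) := by
        rw [hidx, Pcoeff, q1, q2, q3]; ring
      have hc : (0 : ℝ) < 2 * (m.choose s : ℝ) := by
        have := Nat.choose_pos (by omega : s ≤ m)
        have h' : (0 : ℝ) < (m.choose s : ℝ) := by exact_mod_cast this
        linarith
      rw [hval, hdiv]
      exact sign_neg_one_pow_mul s hc
end

section
/- If m and n are both even natural numbers, then the middle coefficient of P_{m,n} = (X−1)^m(X+1)^n does not vanish, i.e., the coefficient of X^{(m+n)/2} in P_{m,n} is nonzero. -/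
open Polynomial

private lemma my_reflect_sub (N : ℕ) (f g : ℝ[X]) :
    reflect N (f - g) = reflect N f - reflect N g := by
  ext i
  simp [coeff_reflect]

private lemma my_deriv_pow_mul (p : ℝ[X]) (m : ℕ) :
    derivative (p ^ m) * p = C (m : ℝ) * p ^ m * derivative p := by
  cases m with
  | zero => simp
  | succ m =>
    rw [derivative_pow, Nat.add_sub_cancel, pow_succ]
    push_cast
    ring

private lemma my_key (m n : ℕ) :
    ((X : ℝ[X]) ^ 2 - 1) * derivative ((X - 1) ^ m * (X + 1) ^ n) =
      (C (m : ℝ) * (X + 1) + C (n : ℝ) * (X - 1)) * ((X - 1) ^ m * (X + 1) ^ n) := by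
  have h1 := my_deriv_pow_mul ((X : ℝ[X]) - 1) m
  have h2 := my_deriv_pow_mul ((X : ℝ[X]) + 1) n
  have d1 : derivative ((X : ℝ[X]) - 1) = 1 := by simp
  have d2 : derivative ((X : ℝ[X]) + 1) = 1 := by simp
  rw [d1, mul_one] at h1
  rw [d2, mul_one] at h2
  rw [derivative_mul]
  linear_combination ((X + 1) * (X + 1) ^ n) * h1 + ((X - 1) * (X - 1) ^ m) * h2

private lemma my_coeff_X_sq_mul_deriv (p : ℝ[X]) (t : ℕ) :
    ((X : ℝ[X]) ^ 2 * derivative p).coeff (t + 1) = (t : ℝ) * p.coeff t := by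
  rw [mul_comm, coeff_mul_X_pow']
  cases t with
  | zero => simp
  | succ s =>
    have h2 : 2 ≤ s + 1 + 1 := by omega
    rw [if_pos h2]
    have : s + 1 + 1 - 2 = s := by omega
    rw [this, coeff_derivative]
    push_cast
    ring

private lemma my_reflect_sub_one (m : ℕ) :
    reflect m (((X : ℝ[X]) - 1) ^ m) = (1 - X) ^ m := by
  induction m with
  | zero => simp
  | succ m ih =>
    have hdeg : (((X : ℝ[X]) - 1) ^ m).natDegree ≤ m := by
      refine le_trans (natDegree_pow_le) ?_
      have : ((X : ℝ[X]) - 1).natDegree = 1 := by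
        rw [show (1 : ℝ[X]) = C 1 from (map_one C).symm, natDegree_X_sub_C]
      rw [this, mul_one]
    have hdeg1 : ((X : ℝ[X]) - 1).natDegree ≤ 1 := by
      rw [show (1 : ℝ[X]) = C 1 from (map_one C).symm, natDegree_X_sub_C]
    rw [pow_succ, reflect_mul _ _ hdeg hdeg1, ih, my_reflect_sub, reflect_one_X,
      reflect_one, pow_one, pow_succ]

private lemma my_reflect_add_one (n : ℕ) :
    reflect n (((X : ℝ[X]) + 1) ^ n) = (X + 1) ^ n := by
  induction n with
  | zero => simp
  | succ n ih =>
    have hdeg : (((X : ℝ[X]) + 1) ^ n).natDegree ≤ n := by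
      refine le_trans (natDegree_pow_le) ?_
      have : ((X : ℝ[X]) + 1).natDegree = 1 := by
        rw [show (1 : ℝ[X]) = C 1 from (map_one C).symm, natDegree_X_add_C]
      rw [this, mul_one]
    have hdeg1 : ((X : ℝ[X]) + 1).natDegree ≤ 1 := by
      rw [show (1 : ℝ[X]) = C 1 from (map_one C).symm, natDegree_X_add_C]
    rw [pow_succ, reflect_mul _ _ hdeg hdeg1, ih, reflect_add, reflect_one_X,
      reflect_one, pow_one]
    ring

private lemma my_palindrome (m n j : ℕ) (hm : Even m) (hj : j ≤ m + n) :
    ((X - 1) ^ m * (X + 1) ^ n : ℝ[X]).coeff j =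
      ((X - 1) ^ m * (X + 1) ^ n : ℝ[X]).coeff (m + n - j) := by
  have hdegm : (((X : ℝ[X]) - 1) ^ m).natDegree ≤ m := by
    refine le_trans (natDegree_pow_le) ?_
    rw [show (1 : ℝ[X]) = C 1 from (map_one C).symm, natDegree_X_sub_C, mul_one]
  have hdegn : (((X : ℝ[X]) + 1) ^ n).natDegree ≤ n := by
    refine le_trans (natDegree_pow_le) ?_
    rw [show (1 : ℝ[X]) = C 1 from (map_one C).symm, natDegree_X_add_C, mul_one]
  have h := reflect_mul (((X : ℝ[X]) - 1) ^ m) (((X : ℝ[X]) + 1) ^ n) hdegm hdegn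
  rw [my_reflect_sub_one, my_reflect_add_one] at h
  have h1m : ((1 : ℝ[X]) - X) ^ m = (X - 1) ^ m := by
    rw [show (1 : ℝ[X]) - X = -(X - 1) by ring, hm.neg_pow]
  rw [h1m] at h
  calc ((X - 1) ^ m * (X + 1) ^ n : ℝ[X]).coeff j
      = (reflect (m + n) ((X - 1) ^ m * (X + 1) ^ n : ℝ[X])).coeff j := by rw [h]
    _ = ((X - 1) ^ m * (X + 1) ^ n : ℝ[X]).coeff (m + n - j) := by
        rw [coeff_reflect, revAt_le hj]

private lemma my_main (b : ℕ) : ∀ a : ℕ,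
    ((X - 1) ^ (a + a) * (X + 1) ^ (b + b) : ℝ[X]).coeff (a + b) ≠ 0 := by
  intro a
  induction a with
  | zero =>
    simp only [Nat.zero_add, pow_zero, one_mul, coeff_X_add_one_pow]
    have : 0 < (b + b).choose b := Nat.choose_pos (by omega)
    exact_mod_cast this.ne'
  | succ a ih =>
    set Q : ℝ[X] := (X - 1) ^ (a + a) * (X + 1) ^ (b + b) with hQ
    rcases Nat.eq_zero_or_pos (a + b) with hab | hab
    · -- a = 0, b = 0
      obtain ⟨rfl, rfl⟩ : a = 0 ∧ b = 0 := by omega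
      have hexp : ((X : ℝ[X]) - 1) ^ (0 + 1 + (0 + 1)) * (X + 1) ^ (0 + 0)
          = X ^ 2 - C 2 * X + 1 := by
        rw [map_ofNat]
        push_cast
        ring
      rw [hexp]
      simp [coeff_one]
    · obtain ⟨t, ht⟩ : ∃ t, a + b = t + 1 := ⟨a + b - 1, by omega⟩
      -- palindrome : coeff t = coeff (t+2)
      have hpal : Q.coeff t = Q.coeff (t + 2) := by
        have hj : t ≤ a + a + (b + b) := by omega
        have := my_palindrome (a + a) (b + b) t ⟨a, rfl⟩ hj
        have hidx : a + a + (b + b) - t = t + 2 := by omega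
        rw [hidx] at this
        exact this
      -- key relation
      have hkey2 : (X : ℝ[X]) ^ 2 * derivative Q - derivative Q
          = C ((a + a : ℕ) : ℝ) * (X * Q) + C ((a + a : ℕ) : ℝ) * Q
            + (C ((b + b : ℕ) : ℝ) * (X * Q) - C ((b + b : ℕ) : ℝ) * Q) := by
        linear_combination my_key (a + a) (b + b)
      have hA := congrArg (fun p : ℝ[X] => p.coeff (t + 1)) hkey2
      simp only [coeff_sub, coeff_add, coeff_C_mul, coeff_X_mul, coeff_derivative,
        my_coeff_X_sq_mul_deriv] at hA
      -- new middle coefficient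
      have hexp : ((X : ℝ[X]) - 1) ^ (a + 1 + (a + 1)) * (X + 1) ^ (b + b)
          = X ^ 2 * Q - C 2 * (X * Q) + Q := by
        have h2 : a + 1 + (a + 1) = (a + a) + 2 := by omega
        rw [h2, pow_add, hQ, map_ofNat]
        ring
      have hidx2 : a + 1 + b = t + 2 := by omega
      rw [hidx2, hexp]
      have hnew : ((X : ℝ[X]) ^ 2 * Q - C 2 * (X * Q) + Q).coeff (t + 2)
          = Q.coeff t - 2 * Q.coeff (t + 1) + Q.coeff (t + 2) := by
        have hx2 : ((X : ℝ[X]) ^ 2 * Q).coeff (t + 2) = Q.coeff t :=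
          coeff_X_pow_mul Q 2 t
        rw [coeff_add, coeff_sub, hx2, coeff_C_mul, coeff_X_mul]
      rw [hnew]
      intro hzero
      have ihs : Q.coeff (t + 1) ≠ 0 := by rw [← ht]; exact ih
      have e1 : Q.coeff t = Q.coeff (t + 1) := by
        rw [hpal] at hzero ⊢
        linarith
      have e2 : Q.coeff (t + 2) = Q.coeff (t + 1) := by rw [← hpal, e1]
      rw [e1, e2] at hA
      have hfin : (2 * (a : ℝ) + 1) * Q.coeff (t + 1) = 0 := by
        push_cast at hA
        linear_combination (-1 / 2 : ℝ) * hA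
      rcases mul_eq_zero.mp hfin with h | h
      · have : (0 : ℝ) < ((a + a : ℕ) : ℝ) + 1 := by positivity
        linarith
      · exact ihs h

/-- If `m` and `n` are both even, the middle coefficient of `P_{m,n} = (X-1)^m (X+1)^n`
does not vanish. -/
theorem middle_coeff_ne_zero_of_even_even (m n : ℕ) (hm : Even m) (hn : Even n) :
    ((X - 1) ^ m * (X + 1) ^ n : ℝ[X]).coeff ((m + n) / 2) ≠ 0 := by
  obtain ⟨a, rfl⟩ := hm
  obtain ⟨b, rfl⟩ := hn
  have h2 : (a + a + (b + b)) / 2 = a + b := by omega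
  rw [h2]
  exact my_main b a
end

section
/- Let n ≥ 2 be a natural number and let a_j denote the coefficient of X^j in P_{2,n} = (X−1)^2(X+1)^n. Then for 0 ≤ j ≤ n+2, one has a_j = 0 if and only if there exists a natural number ν ≥ 2 with n = ν²−2 and either j = ν(ν−1)/2 or j = ν(ν+1)/2. In particular, P_{2,n} has a vanishing coefficient exactly when n = ν²−2 for some integer ν ≥ 2, and in that case exactly two coefficients vanish. -/
open Polynomial

/-!
Write `j = k + 1`. Expanding `(X - 1)² = (X + 1)² - 4X` gives
`a_{k+1} = C(n+2, k+1) - 4 C(n, k)`,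
and since `(k + 1)(n + 1 - k) C(n+2, k+1) = (n + 2)(n + 1) C(n, k)`,
`(k + 1)(n + 1 - k) a_{k+1} = C(n, k) ((2j - (n + 2))² - (n + 2))`.
So for `1 ≤ j ≤ n + 1` the coefficient vanishes iff `|2j - (n + 2)| = ν` with `ν² = n + 2`,
i.e. `2j = ν² ∓ ν`.
-/

theorem coeff_X_sub_one_sq_mul_X_add_one_pow_succ {R : Type*} [CommRing R] (n k : ℕ) :
    ((X - 1) ^ 2 * (X + 1) ^ n : R[X]).coeff (k + 1) = (n + 2).choose (k + 1) - 4 * n.choose k := by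
  have h : ((X - 1) ^ 2 * (X + 1) ^ n : R[X]) = (X + 1) ^ (n + 2) - C 4 * (X * (X + 1) ^ n) := by
    rw [map_ofNat]; ring
  rw [h, coeff_sub, coeff_C_mul, coeff_X_mul, coeff_X_add_one_pow, coeff_X_add_one_pow]

theorem Nat.add_one_mul_sub_mul_choose_add_two (n k : ℕ) :
    (k + 1) * (n + 1 - k) * (n + 2).choose (k + 1) = (n + 2) * (n + 1) * n.choose k := by
  calc (k + 1) * (n + 1 - k) * (n + 2).choose (k + 1)
      = (n + 2) * (n + 1).choose k * (n + 1 - k) := by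
        rw [Nat.add_one_mul_choose_eq (n + 1) k]; ring
    _ = (n + 2) * (n + 1) * n.choose k := by rw [mul_assoc, ← Nat.choose_mul_succ_eq]; ring

theorem Nat.choose_add_two_eq_four_mul_choose_iff {n k : ℕ} (hk : k ≤ n + 1) :
    (n + 2).choose (k + 1) = 4 * n.choose k ↔ (2 * k - n : ℤ) ^ 2 = n + 2 := by
  rcases hk.eq_or_lt with rfl | hlt
  · rw [Nat.choose_self, Nat.choose_eq_zero_of_lt (Nat.lt_succ_self n)]
    constructor
    · omega
    · intro h; push_cast at h; nlinarith
  have hD : ((k + 1) * (n + 1 - k) : ℤ) ≠ 0 := by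
    apply mul_ne_zero <;> omega
  have hc : (n.choose k : ℤ) ≠ 0 := by exact_mod_cast (Nat.choose_pos (by omega)).ne'
  have key : ((k + 1) * (n + 1 - k) : ℤ) * ((n + 2).choose (k + 1) - 4 * n.choose k)
      = n.choose k * ((2 * k - n) ^ 2 - (n + 2)) := by
    have := Nat.add_one_mul_sub_mul_choose_add_two n k
    have hsub : ((n + 1 - k : ℕ) : ℤ) = n + 1 - k := by omega
    zify [hsub] at this
    linear_combination this
  rw [← sub_eq_zero (b := (n + 2 : ℤ)), ← mul_right_inj' hc, mul_zero, ← key, _root_.mul_eq_zero,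
    or_iff_right hD, sub_eq_zero]
  norm_cast

theorem sq_two_mul_sub_eq_self_iff (N j : ℕ) :
    (2 * j - N : ℤ) ^ 2 = N ↔ ∃ ν : ℕ, N = ν ^ 2 ∧ (j = ν * (ν - 1) / 2 ∨ j = ν * (ν + 1) / 2) := by
  have hhalf (ν : ℕ) : j = ν * (ν - 1) / 2 ∨ j = ν * (ν + 1) / 2 ↔
      2 * j + ν = ν ^ 2 ∨ 2 * j = ν ^ 2 + ν := by
    have hpred : ν * (ν - 1) + ν = ν ^ 2 := by cases ν <;> simp; ring
    have hsucc : ν * (ν + 1) = ν ^ 2 + ν := by ring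
    have := Nat.even_mul_pred_self ν
    have := Nat.even_mul_succ_self ν
    rw [Nat.even_iff] at *
    omega
  simp only [hhalf]
  constructor
  · intro h
    obtain ⟨ν, hν⟩ : ∃ ν : ℕ, (2 * j - N : ℤ) = ν ∨ (2 * j - N : ℤ) = -ν := ⟨_, Int.natAbs_eq _⟩
    have hN : (N : ℤ) = ν ^ 2 := by
      rw [← h]; rcases hν with hν | hν <;> simp only [hν, neg_sq]
    refine ⟨ν, by exact_mod_cast hN, ?_⟩
    zify
    omega
  · rintro ⟨ν, rfl, hj⟩
    zify at hj
    push_cast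
    rcases (by omega : (2 * j - ν ^ 2 : ℤ) = -ν ∨ (2 * j - ν ^ 2 : ℤ) = ν) with hd | hd <;>
      simp [hd]

theorem vanishing_coeff_P_two_n_general (n : ℕ) (j : ℕ) (hj : j ≤ n + 2) :
    ((X - 1) ^ 2 * (X + 1) ^ n : ℝ[X]).coeff j = 0 ↔
      ∃ ν : ℕ, 2 ≤ ν ∧ n = ν ^ 2 - 2 ∧ (j = ν * (ν - 1) / 2 ∨ j = ν * (ν + 1) / 2) := by
  have hν (ν : ℕ) : 2 ≤ ν ∧ n = ν ^ 2 - 2 ↔ n + 2 = ν ^ 2 := by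
    refine ⟨fun h => by have := Nat.pow_le_pow_left h.1 2; omega, fun h => ⟨?_, by omega⟩⟩
    by_contra! hlt
    have := Nat.pow_le_pow_left (Nat.le_of_lt_succ hlt) 2
    omega
  simp only [← and_assoc, hν]
  rw [← sq_two_mul_sub_eq_self_iff]
  rcases j with _ | k
  · rw [coeff_zero_eq_eval_zero]
    push_cast
    constructor
    · simp
    · intro h; nlinarith
  · rw [coeff_X_sub_one_sq_mul_X_add_one_pow_succ, sub_eq_zero, show (4 : ℝ) = (4 : ℕ) by norm_num,
      ← Nat.cast_mul, Nat.cast_inj, Nat.choose_add_two_eq_four_mul_choose_iff (by omega)]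
    push_cast
    ring_nf

/-- For `n ≥ 2` and `0 ≤ j ≤ n+2`, the coefficient of `X^j` in `P_{2,n} = (X-1)^2 (X+1)^n`
vanishes if and only if `n = ν² - 2` for some `ν ≥ 2` and `j = ν(ν-1)/2` or `j = ν(ν+1)/2`. -/
theorem vanishing_coeff_P_two_n (n : ℕ) (hn : 2 ≤ n) (j : ℕ) (hj : j ≤ n + 2) :
    ((X - 1) ^ 2 * (X + 1) ^ n : ℝ[X]).coeff j = 0 ↔
      ∃ ν : ℕ, 2 ≤ ν ∧ n = ν ^ 2 - 2 ∧ (j = ν * (ν - 1) / 2 ∨ j = ν * (ν + 1) / 2) :=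
  vanishing_coeff_P_two_n_general n j hj
end

section
/- Let ν ≥ 2 be a natural number and let n be a natural number with ν²−2 < n < (ν+1)²−2. Set ρ := ⌊(n−ν)/2⌋ + 1 if n−ν is even and ρ := ⌊(n−ν)/2⌋ + 2 if n−ν is odd, and let a_j denote the coefficient of X^j in P_{2,n} = (X−1)^2(X+1)^n. Then all coefficients a_j (0 ≤ j ≤ n+2) are nonzero; moreover a_j > 0 for 0 ≤ j < ρ and for n+2−ρ < j ≤ n+2, and a_j < 0 for ρ ≤ j ≤ n+2−ρ. (That is, the sign pattern of P_{2,n} is Σ_{ρ, ν+1, ρ} if n−ν is even and Σ_{ρ, ν, ρ} if n−ν is odd.) -/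
open Polynomial

lemma coeff_eq (n k : ℕ) :
    ((X - 1) ^ 2 * (X + 1) ^ n : ℝ[X]).coeff (k + 2) =
      (n.choose (k + 2) : ℝ) - 2 * n.choose (k + 1) + n.choose k := by
  have h : ((X - 1) ^ 2 * (X + 1) ^ n : ℝ[X]) =
      X ^ 2 * (X + 1) ^ n - C 2 * (X * (X + 1) ^ n) + (X + 1) ^ n := by
    rw [map_ofNat]; ring
  rw [h, coeff_add, coeff_sub, coeff_C_mul,
    show k + 2 = k + 1 + 1 from rfl, coeff_X_mul,
    show k + 1 + 1 = k + 2 from rfl, coeff_X_pow_mul]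
  simp [coeff_X_add_one_pow]
  ring

lemma key (n k : ℕ) (hk : k ≤ n) :
    ((X - 1) ^ 2 * (X + 1) ^ n : ℝ[X]).coeff (k + 2) * (((k : ℝ) + 1) * ((k : ℝ) + 2)) =
      (n.choose k : ℝ) * ((2 * (k : ℝ) + 2 - n) ^ 2 - ((n : ℝ) + 2)) := by
  have A1 : (n.choose (k + 1) : ℝ) * ((k : ℝ) + 1) = n.choose k * ((n : ℝ) - k) := by
    have h := congrArg (Nat.cast (R := ℝ)) (Nat.choose_succ_right_eq n k)
    push_cast [Nat.cast_sub hk] at h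
    linarith [h]
  have A2 : (n.choose (k + 2) : ℝ) * ((k : ℝ) + 2) = n.choose (k + 1) * ((n : ℝ) - k - 1) := by
    rcases Nat.lt_or_ge k n with h | h
    · have h' := congrArg (Nat.cast (R := ℝ)) (Nat.choose_succ_right_eq n (k + 1))
      push_cast [Nat.cast_sub h] at h'
      linarith [h']
    · have hkn : k = n := le_antisymm hk h
      subst hkn
      simp [Nat.choose_eq_zero_of_lt]
  rw [coeff_eq]
  linear_combination ((k : ℝ) + 1) * A2 + (((n : ℝ) - k - 1) - 2 * ((k : ℝ) + 2)) * A1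

lemma coeff_zero' (n : ℕ) : ((X - 1) ^ 2 * (X + 1) ^ n : ℝ[X]).coeff 0 = 1 := by
  rw [Polynomial.coeff_zero_eq_eval_zero]
  simp

lemma coeff_one' (n : ℕ) : ((X - 1) ^ 2 * (X + 1) ^ n : ℝ[X]).coeff 1 = (n : ℝ) - 2 := by
  have h : ((X - 1) ^ 2 * (X + 1) ^ n : ℝ[X]) =
      X ^ 2 * (X + 1) ^ n - C 2 * (X * (X + 1) ^ n) + (X + 1) ^ n := by
    rw [map_ofNat]; ring
  rw [h, coeff_add, coeff_sub, coeff_C_mul]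
  have e1 : (X ^ 2 * ((X + 1) ^ n) : ℝ[X]).coeff 1 = 0 := by
    have : (X ^ 2 * ((X + 1) ^ n) : ℝ[X]) = X * (X * (X + 1) ^ n) := by ring
    rw [this, show (1 : ℕ) = 0 + 1 from rfl, coeff_X_mul, Polynomial.mul_coeff_zero,
      coeff_X_zero, zero_mul]
  have e2 : (X * ((X + 1) ^ n) : ℝ[X]).coeff 1 = 1 := by
    rw [show (1 : ℕ) = 0 + 1 from rfl, coeff_X_mul, coeff_X_add_one_pow,
      Nat.choose_zero_right, Nat.cast_one]
  rw [e1, e2, coeff_X_add_one_pow, Nat.choose_one_right]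
  ring

/-- For `ν ≥ 2` and `ν² - 2 < n < (ν+1)² - 2`, with `ρ = ⌊(n-ν)/2⌋ + 1` if `n - ν` is even
and `ρ = ⌊(n-ν)/2⌋ + 2` if `n - ν` is odd, all coefficients of `P_{2,n} = (X-1)^2 (X+1)^n`
are nonzero; they are positive for `j < ρ` and for `j > n+2-ρ`, and negative for
`ρ ≤ j ≤ n+2-ρ`. -/
theorem sign_pattern_P_two_n (ν n : ℕ) (hν : 2 ≤ ν)
    (h1 : ν ^ 2 - 2 < n) (h2 : n < (ν + 1) ^ 2 - 2)
    (ρ : ℕ) (hρ : ρ = if Even (n - ν) then (n - ν) / 2 + 1 else (n - ν) / 2 + 2)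
    (j : ℕ) (hj : j ≤ n + 2) :
    ((X - 1) ^ 2 * (X + 1) ^ n : ℝ[X]).coeff j ≠ 0 ∧
    ((j < ρ ∨ n + 2 - ρ < j) → 0 < ((X - 1) ^ 2 * (X + 1) ^ n : ℝ[X]).coeff j) ∧
    (ρ ≤ j ∧ j ≤ n + 2 - ρ → ((X - 1) ^ 2 * (X + 1) ^ n : ℝ[X]).coeff j < 0) := by
  have hs4 : 4 ≤ ν ^ 2 := by nlinarith
  have hm1 : ν ^ 2 < n + 2 := by omega
  have hm2 : n + 2 < (ν + 1) ^ 2 := by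
    have : 9 ≤ (ν + 1) ^ 2 := by nlinarith
    omega
  have hνn : ν + 1 ≤ n := by nlinarith
  have hn3 : 3 ≤ n := by nlinarith
  have hρ2 : 2 ≤ ρ := by
    by_cases hpar : Even (n - ν)
    · rw [if_pos hpar] at hρ
      rw [Nat.even_iff] at hpar
      omega
    · rw [if_neg hpar] at hρ
      omega
  -- region bounds on 2*j
  have hregion_neg : ρ ≤ j ∧ j ≤ n + 2 - ρ → n + 2 ≤ 2 * j + ν ∧ 2 * j ≤ n + 2 + ν := by
    by_cases hpar : Even (n - ν) <;>
      [rw [if_pos hpar] at hρ; rw [if_neg hpar] at hρ] <;>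
      rw [Nat.even_iff] at hpar <;> omega
  have hregion_pos : (j < ρ ∨ n + 2 - ρ < j) →
      2 * j + ν + 1 ≤ n + 2 ∨ n + 2 + ν + 1 ≤ 2 * j := by
    by_cases hpar : Even (n - ν) <;>
      [rw [if_pos hpar] at hρ; rw [if_neg hpar] at hρ] <;>
      rw [Nat.even_iff] at hpar <;> omega
  -- cast facts
  have hm1R : ((ν : ℝ)) ^ 2 < (n : ℝ) + 2 := by exact_mod_cast hm1
  have hm2R : ((n : ℝ)) + 2 < ((ν : ℝ) + 1) ^ 2 := by exact_mod_cast hm2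
  -- main sign claims
  have Hpos : (j < ρ ∨ n + 2 - ρ < j) →
      0 < ((X - 1) ^ 2 * (X + 1) ^ n : ℝ[X]).coeff j := by
    intro hr
    have hb := hregion_pos hr
    rcases j with _ | _ | k
    · rw [coeff_zero']; norm_num
    · rw [coeff_one']
      have h3R : (3 : ℝ) ≤ (n : ℝ) := by exact_mod_cast hn3
      linarith
    · 
      have hk : k ≤ n := by omega
      have K := key n k hk
      have hP : (0 : ℝ) < ((k : ℝ) + 1) * ((k : ℝ) + 2) := by positivity
      have hC : (0 : ℝ) < (n.choose k : ℝ) := by exact_mod_cast Nat.choose_pos hk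
      have hg : (0 : ℝ) < (2 * (k : ℝ) + 2 - n) ^ 2 - ((n : ℝ) + 2) := by
        rcases hb with hb | hb
        · have hbR : 2 * ((k : ℝ) + 2) + ν + 1 ≤ (n : ℝ) + 2 := by exact_mod_cast hb
          nlinarith
        · have hbR : (n : ℝ) + 2 + ν + 1 ≤ 2 * ((k : ℝ) + 2) := by exact_mod_cast hb
          nlinarith
      have hc : ((X - 1) ^ 2 * (X + 1) ^ n : ℝ[X]).coeff (k + 2) =
          (n.choose k : ℝ) * ((2 * (k : ℝ) + 2 - n) ^ 2 - ((n : ℝ) + 2)) /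
            (((k : ℝ) + 1) * ((k : ℝ) + 2)) := by
        rw [eq_div_iff hP.ne']; exact K
      rw [hc]
      exact div_pos (mul_pos hC hg) hP
  have Hneg : ρ ≤ j ∧ j ≤ n + 2 - ρ →
      ((X - 1) ^ 2 * (X + 1) ^ n : ℝ[X]).coeff j < 0 := by
    intro hr
    have hb := hregion_neg hr
    rcases j with _ | _ | k
    · omega
    · omega
    · 
      have hk : k ≤ n := by omega
      have K := key n k hk
      have hP : (0 : ℝ) < ((k : ℝ) + 1) * ((k : ℝ) + 2) := by positivity
      have hC : (0 : ℝ) < (n.choose k : ℝ) := by exact_mod_cast Nat.choose_pos hk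
      have hg : (2 * (k : ℝ) + 2 - n) ^ 2 - ((n : ℝ) + 2) < 0 := by
        obtain ⟨hb1, hb2⟩ := hb
        have hb1R : (n : ℝ) + 2 ≤ 2 * ((k : ℝ) + 2) + ν := by exact_mod_cast hb1
        have hb2R : 2 * ((k : ℝ) + 2) ≤ (n : ℝ) + 2 + ν := by exact_mod_cast hb2
        have hD : (2 * (k : ℝ) + 2 - n) ^ 2 ≤ (ν : ℝ) ^ 2 :=
          sq_le_sq' (by linarith) (by linarith)
        linarith
      have hc : ((X - 1) ^ 2 * (X + 1) ^ n : ℝ[X]).coeff (k + 2) =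
          (n.choose k : ℝ) * ((2 * (k : ℝ) + 2 - n) ^ 2 - ((n : ℝ) + 2)) /
            (((k : ℝ) + 1) * ((k : ℝ) + 2)) := by
        rw [eq_div_iff hP.ne']; exact K
      rw [hc]
      exact div_neg_of_neg_of_pos (mul_neg_of_pos_of_neg hC hg) hP
  refine ⟨?_, Hpos, Hneg⟩
  rcases lt_or_ge j ρ with h | h
  · exact (Hpos (Or.inl h)).ne'
  · rcases le_or_gt j (n + 2 - ρ) with h' | h'
    · exact (Hneg ⟨h, h'⟩).ne
    · exact (Hpos (Or.inr h')).ne'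
end

section
/- Let n ≥ 3 be a natural number and let a_j denote the coefficient of X^j in P_{3,n} = (X−1)^3(X+1)^n. Then for 0 ≤ j ≤ n+3, one has a_j = 0 if and only if either (a) n is odd and j = (n+3)/2, or (b) there exists a natural number μ ≥ 4 not divisible by 3 such that n = (μ²−7)/3 and j equals one of (μ−1)(μ−2)/6 or (μ+1)(μ+2)/6. -/
open Polynomial

lemma fac_mul : ∀ (k a : ℕ), k ≤ a →
    (a.factorial : ℤ) = ((a - k).factorial : ℤ) * ∏ i ∈ Finset.range k, ((a : ℤ) - i)
  | 0, a, _ => by simp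
  | (k+1), a, h => by
    have ih := fac_mul k a (by omega)
    have h1 : a - k = (a - (k+1)) + 1 := by omega
    have h2 : ((a - (k+1) : ℕ) : ℤ) + 1 = (a : ℤ) - k := by omega
    rw [Finset.prod_range_succ, ih, h1, Nat.factorial_succ]
    push_cast
    rw [h2]
    ring

lemma term_eq (n j k : ℕ) (hj : j ≤ n + 3) (hk : k ≤ 3) :
    (if k ≤ j then ((n.choose (j - k) : ℤ)) else 0) * (j.factorial : ℤ) * ((n + 3 - j).factorial : ℤ)
      = (n.factorial : ℤ) * (∏ i ∈ Finset.range k, ((j : ℤ) - i)) *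
          ∏ i ∈ Finset.range (3 - k), ((n : ℤ) + 3 - j - i) := by
  split_ifs with h1
  · by_cases h2 : j - k ≤ n
    · have hck := Nat.choose_mul_factorial_mul_factorial h2
      have hckZ : ((n.choose (j-k) : ℤ)) * ((j-k).factorial : ℤ) * ((n - (j-k)).factorial : ℤ)
          = (n.factorial : ℤ) := by exact_mod_cast congrArg (Nat.cast : ℕ → ℤ) hck
      have hA := fac_mul k j h1
      have hB := fac_mul (3-k) (n+3-j) (by omega)
      have e1 : n + 3 - j - (3 - k) = n - (j - k) := by omega
      have e2 : ((n + 3 - j : ℕ) : ℤ) = (n : ℤ) + 3 - j := by omega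
      rw [e1, e2] at hB
      rw [hA, hB]
      linear_combination ((∏ i ∈ Finset.range k, ((j : ℤ) - i)) *
          ∏ i ∈ Finset.range (3 - k), ((n : ℤ) + 3 - j - i)) * hckZ
    · rw [Nat.choose_eq_zero_of_lt (by omega)]
      rw [Finset.prod_eq_zero (Finset.mem_range.mpr (show n + 3 - j < 3 - k by omega))
        (show (n : ℤ) + 3 - j - ((n + 3 - j : ℕ) : ℤ) = 0 by omega)]
      simp
  · rw [Finset.prod_eq_zero (Finset.mem_range.mpr (show j < k by omega))
      (show (j : ℤ) - ((j : ℕ) : ℤ) = 0 by omega)]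
    simp

lemma coeff_expand (n j : ℕ) :
    ((X - 1) ^ 3 * (X + 1) ^ n : ℝ[X]).coeff j =
      (if 3 ≤ j then ((n.choose (j-3) : ℝ)) else 0)
      - 3 * (if 2 ≤ j then ((n.choose (j-2) : ℝ)) else 0)
      + 3 * (if 1 ≤ j then ((n.choose (j-1) : ℝ)) else 0)
      - (n.choose j : ℝ) := by
  have hexp : ((X - 1) ^ 3 * (X + 1) ^ n : ℝ[X]) =
      (X+1)^n * X^3 - C 3 * ((X+1)^n * X^2) + C 3 * ((X+1)^n * X^1) - (X+1)^n := by
    rw [map_ofNat]; ring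
  rw [hexp, coeff_sub, coeff_add, coeff_sub, coeff_C_mul, coeff_C_mul,
    coeff_mul_X_pow', coeff_mul_X_pow', coeff_mul_X_pow']
  simp only [coeff_X_add_one_pow, pow_one]


lemma star_eq (n j : ℕ) (hj : j ≤ n + 3) :
    (((X - 1) ^ 3 * (X + 1) ^ n : ℝ[X]).coeff j) * ((j.factorial : ℝ) * ((n+3-j).factorial : ℝ))
      = (n.factorial : ℝ) *
        (((2*(j:ℤ) - ((n:ℤ)+3)) * (((n:ℤ)+2)*((n:ℤ)+1) - 4*(j:ℤ)*((n:ℤ)+3-(j:ℤ))) : ℤ) : ℝ) := by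
  have t3 := term_eq n j 3 hj (by norm_num)
  have t2 := term_eq n j 2 hj (by norm_num)
  have t1 := term_eq n j 1 hj (by norm_num)
  have t0 := term_eq n j 0 hj (by norm_num)
  simp only [Finset.prod_range_succ, Finset.prod_range_zero, Finset.prod_range_one,
    Nat.cast_ofNat, Nat.cast_zero, Nat.cast_one, one_mul, Nat.zero_le, if_true,
    Nat.sub_zero, Nat.sub_self] at t3 t2 t1 t0
  have hZ : ((if 3 ≤ j then ((n.choose (j-3) : ℤ)) else 0)
      - 3 * (if 2 ≤ j then ((n.choose (j-2) : ℤ)) else 0)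
      + 3 * (if 1 ≤ j then ((n.choose (j-1) : ℤ)) else 0)
      - (n.choose j : ℤ)) * ((j.factorial : ℤ) * ((n+3-j).factorial : ℤ))
      = (n.factorial : ℤ) *
        ((2*(j:ℤ) - ((n:ℤ)+3)) * (((n:ℤ)+2)*((n:ℤ)+1) - 4*(j:ℤ)*((n:ℤ)+3-(j:ℤ)))) := by
    linear_combination t3 - 3 * t2 + 3 * t1 - t0
  rw [coeff_expand n j]
  have hZR := congrArg (Int.cast : ℤ → ℝ) hZ
  push_cast [apply_ite (Int.cast : ℤ → ℝ)] at hZR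
  push_cast
  linear_combination hZR


/-- For `n ≥ 3` and `0 ≤ j ≤ n+3`, the coefficient of `X^j` in `P_{3,n} = (X-1)^3 (X+1)^n`
vanishes if and only if either `n` is odd and `j = (n+3)/2`, or there is `μ ≥ 4` not
divisible by `3` with `μ² = 3n + 7` and `6j = (μ-1)(μ-2)` or `6j = (μ+1)(μ+2)`. -/
theorem vanishing_coeff_P_three_n (n : ℕ) (hn : 3 ≤ n) (j : ℕ) (hj : j ≤ n + 3) :
    ((X - 1) ^ 3 * (X + 1) ^ n : ℝ[X]).coeff j = 0 ↔
      (Odd n ∧ 2 * j = n + 3) ∨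
      (∃ μ : ℕ, 4 ≤ μ ∧ ¬(3 ∣ μ) ∧ μ ^ 2 = 3 * n + 7 ∧
        (6 * j = (μ - 1) * (μ - 2) ∨ 6 * j = (μ + 1) * (μ + 2))) := by
  have hstar := star_eq n j hj
  have hfacpos : (0 : ℝ) < (j.factorial : ℝ) * ((n+3-j).factorial : ℝ) := by
    positivity
  have hmaster : (((X - 1) ^ 3 * (X + 1) ^ n : ℝ[X]).coeff j = 0) ↔
      ((2*(j:ℤ) - ((n:ℤ)+3)) * (((n:ℤ)+2)*((n:ℤ)+1) - 4*(j:ℤ)*((n:ℤ)+3-(j:ℤ))) = 0) := by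
    constructor
    · intro h
      rw [h, zero_mul] at hstar
      have hne : (n.factorial : ℝ) ≠ 0 := by positivity
      have h0 : (((2*(j:ℤ) - ((n:ℤ)+3)) * (((n:ℤ)+2)*((n:ℤ)+1) - 4*(j:ℤ)*((n:ℤ)+3-(j:ℤ))) : ℤ) : ℝ) = 0 :=
        (mul_eq_zero.mp hstar.symm).resolve_left hne
      exact_mod_cast h0
    · intro h
      rw [h] at hstar
      push_cast at hstar
      have := hstar
      rw [mul_zero] at this
      exact (mul_eq_zero.mp this).resolve_right (by positivity)
  rw [hmaster]
  constructor
  · intro h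
    rcases mul_eq_zero.mp h with h1 | h2
    · left
      constructor
      · rw [Nat.odd_iff]; omega
      · omega
    · right
      have hsq : (2*(j:ℤ) - ((n:ℤ)+3))^2 = 3*(n:ℤ)+7 := by linear_combination h2
      set a : ℤ := 2*(j:ℤ) - ((n:ℤ)+3) with ha
      have hμZ : ((a.natAbs : ℤ))^2 = 3*(n:ℤ)+7 := by
        rw [show ((a.natAbs : ℤ)) = |a| from (Int.abs_eq_natAbs a).symm, sq_abs]
        exact hsq
      have hμ2 : a.natAbs ^ 2 = 3*n+7 := by exact_mod_cast hμZ
      have hge4 : 4 ≤ a.natAbs := by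
        by_contra hc
        push_neg at hc
        have h9 : a.natAbs^2 ≤ 3^2 := Nat.pow_le_pow_left (by omega) 2
        norm_num at h9
        linarith
      refine ⟨a.natAbs, hge4, ?_, hμ2, ?_⟩
      · intro hd
        have h3 : 3 ∣ a.natAbs^2 := dvd_pow hd (by norm_num)
        rw [hμ2] at h3
        omega
      · rcases Int.natAbs_eq a with he | he
        · right
          have h2j : 2*j = n + 3 + a.natAbs := by omega
          have hr : (a.natAbs+1)*(a.natAbs+2) = a.natAbs^2 + 3*a.natAbs + 2 := by ring
          rw [hr, hμ2]
          omega
        · left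
          have h2j : 2*j + a.natAbs = n + 3 := by omega
          obtain ⟨t, ht⟩ : ∃ t, a.natAbs = t + 4 := ⟨a.natAbs - 4, by omega⟩
          rw [ht]
          have hr : (t+4-1)*(t+4-2) = t^2+5*t+6 := by
            rw [show t+4-1 = t+3 from by omega, show t+4-2 = t+2 from by omega]
            ring
          rw [hr]
          rw [ht, show (t+4)^2 = t^2+8*t+16 from by ring] at hμ2
          rw [ht] at h2j
          linarith
  · intro h
    rcases h with ⟨hodd, h2j⟩ | ⟨μ, hμ4, hμ3, hμ2, hjcase⟩
    · have : 2*(j:ℤ) - ((n:ℤ)+3) = 0 := by omega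
      rw [this, zero_mul]
    · have hA : (μ:ℤ)^2 = 3*(n:ℤ)+7 := by exact_mod_cast hμ2
      have h9 : (9:ℤ) * (((n:ℤ)+2)*((n:ℤ)+1) - 4*(j:ℤ)*((n:ℤ)+3-(j:ℤ))) = 0 := by
        rcases hjcase with hB | hB
        · have hBZ : (6:ℤ)*(j:ℤ) = (μ:ℤ)^2 - 3*(μ:ℤ) + 2 := by
            have := congrArg (Nat.cast : ℕ → ℤ) hB
            push_cast [Nat.cast_sub (show 1 ≤ μ by omega), Nat.cast_sub (show 2 ≤ μ by omega)] at this
            linear_combination this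
          linear_combination ((μ:ℤ)^2 - 6*(μ:ℤ) - 3*(n:ℤ) + 2) * hA
            + ((μ:ℤ)^2 - 3*(μ:ℤ) + 6*(j:ℤ) - 6*(n:ℤ) - 16) * hBZ
        · have hBZ : (6:ℤ)*(j:ℤ) = (μ:ℤ)^2 + 3*(μ:ℤ) + 2 := by
            have := congrArg (Nat.cast : ℕ → ℤ) hB
            push_cast at this
            linear_combination this
          linear_combination ((μ:ℤ)^2 + 6*(μ:ℤ) - 3*(n:ℤ) + 2) * hA
            + ((μ:ℤ)^2 + 3*(μ:ℤ) + 6*(j:ℤ) - 6*(n:ℤ) - 16) * hBZ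
      have : ((n:ℤ)+2)*((n:ℤ)+1) - 4*(j:ℤ)*((n:ℤ)+3-(j:ℤ)) = 0 := by linarith
      rw [this, mul_zero]
end

section
/- Let μ ≥ 4 be a natural number not divisible by 3, set n := (μ²−7)/3 and γ := (μ−1)(μ−2)/6, and let a_j denote the coefficient of X^j in P_{3,n} = (X−1)^3(X+1)^n, a polynomial of degree n+3 = (μ²+2)/3. If μ ≡ 1 or 5 (mod 6) (so n is even), then: a_j > 0 for (μ+1)(μ+2)/6 < j ≤ n+3; a_{(μ+1)(μ+2)/6} = 0; a_j < 0 for (n+4)/2 ≤ j < (μ+1)(μ+2)/6; a_j > 0 for (μ−1)(μ−2)/6 < j ≤ (n+2)/2; a_{(μ−1)(μ−2)/6} = 0; and a_j < 0 for 0 ≤ j < (μ−1)(μ−2)/6 (generalized sign pattern Σ_{γ,0,(μ−1)/2,(μ−1)/2,0,γ}). If μ ≡ 2 or 4 (mod 6) (so n is odd), then: a_j > 0 for (μ+1)(μ+2)/6 < j ≤ n+3; a_{(μ+1)(μ+2)/6} = 0; a_j < 0 for (n+3)/2 < j < (μ+1)(μ+2)/6; a_{(n+3)/2} = 0; a_j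 > 0 for (μ−1)(μ−2)/6 < j < (n+3)/2; a_{(μ−1)(μ−2)/6} = 0; and a_j < 0 for 0 ≤ j < (μ−1)(μ−2)/6 (generalized sign pattern Σ_{γ,0,μ/2−1,0,μ/2−1,0,γ}). -/
open Polynomial

lemma coeffP (n j : ℕ) : ((X - 1) ^ 3 * (X + 1) ^ n : ℝ[X]).coeff j =
    ((n+3).choose j : ℝ) - 6 * ((n+2).choose j : ℝ) + 12 * ((n+1).choose j : ℝ)
      - 8 * (n.choose j : ℝ) := by
  have h : ((X - 1) ^ 3 * (X + 1) ^ n : ℝ[X]) =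
      (X + 1) ^ (n+3) - 6 * (X + 1) ^ (n+2) + 12 * (X + 1) ^ (n+1) - 8 * (X + 1) ^ n := by
    ring
  have hc : ∀ m : ℕ, ((X + 1 : ℝ[X]) ^ m).coeff j = (m.choose j : ℝ) := fun m =>
    coeff_X_add_one_pow ℝ m j
  rw [h]
  simp only [coeff_sub, coeff_add, coeff_ofNat_mul, hc]

lemma step (m j : ℕ) : ((m:ℝ)+1) * (m.choose j : ℝ) = ((m+1).choose j : ℝ) * (((m:ℝ)+1) - j) := by
  rcases le_or_gt j (m+1) with h | h
  · have h0 := Nat.choose_mul_succ_eq m j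
    have h1 : ((m.choose j * (m+1) : ℕ) : ℝ) = (((m+1).choose j * (m + 1 - j) : ℕ) : ℝ) := by
      exact_mod_cast congrArg (Nat.cast : ℕ → ℝ) h0
    push_cast [h] at h1
    linarith
  · rw [Nat.choose_eq_zero_of_lt (by omega), Nat.choose_eq_zero_of_lt (by omega)]
    norm_num

lemma master (μ n : ℕ) (hn : 3 * n + 7 = μ ^ 2) (j : ℕ) :
    ((n:ℝ)+1) * ((n:ℝ)+2) * ((n:ℝ)+3) * (((X - 1) ^ 3 * (X + 1) ^ n : ℝ[X]).coeff j)
      = ((n+3).choose j : ℝ) *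
        (((n:ℝ)+3-2*j) * ((μ:ℝ)^2 - ((n:ℝ)+3-2*j)^2)) := by
  have h1 := step (n+2) j
  have h2 := step (n+1) j
  have h3 := step n j
  push_cast at h1 h2 h3
  have hμ : (μ:ℝ)^2 = 3*(n:ℝ)+7 := by exact_mod_cast congrArg (Nat.cast : ℕ → ℝ) hn.symm
  rw [coeffP]
  linear_combination
    ((-6)*((n:ℝ)+1)*((n:ℝ)+2) + (12*((n:ℝ)+1) - 8*((n:ℝ)+1-(j:ℝ)))*((n:ℝ)+2-(j:ℝ))) * h1
    + (12*((n:ℝ)+1)*((n:ℝ)+3) - 8*((n:ℝ)+3)*((n:ℝ)+1-(j:ℝ))) * h2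
    + ((-8)*((n:ℝ)+2)*((n:ℝ)+3)) * h3
    + (-(((n+3).choose j : ℝ)) * ((n:ℝ)+3-2*(j:ℝ))) * hμ

lemma sgn1 (T M : ℝ) (h1 : 0 ≤ M) (h2 : T ≤ -M - 2) : 0 < T * (M^2 - T^2) := by
  have hT : T < 0 := by linarith
  have hs : M^2 < T^2 := by
    nlinarith [mul_pos (show (0:ℝ) < -(T+M) by linarith) (show (0:ℝ) < -(T-M) by linarith)]
  nlinarith [mul_pos (show (0:ℝ) < -T by linarith) (show (0:ℝ) < T^2 - M^2 by linarith)]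

lemma sgn2 (T M : ℝ) (h1 : 2 ≤ M) (h2 : -M + 2 ≤ T) (h3 : T ≤ -1) : T * (M^2 - T^2) < 0 := by
  have hs : T^2 < M^2 := by
    nlinarith [mul_pos (show (0:ℝ) < M - T by linarith) (show (0:ℝ) < M + T by linarith)]
  nlinarith [mul_pos (show (0:ℝ) < -T by linarith) (show (0:ℝ) < M^2 - T^2 by linarith)]

lemma sgn3 (T M : ℝ) (h1 : 2 ≤ M) (h2 : 1 ≤ T) (h3 : T ≤ M - 2) : 0 < T * (M^2 - T^2) := by
  have hs : T^2 < M^2 := by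
    nlinarith [mul_pos (show (0:ℝ) < M - T by linarith) (show (0:ℝ) < M + T by linarith)]
  nlinarith [mul_pos (show (0:ℝ) < T by linarith) (show (0:ℝ) < M^2 - T^2 by linarith)]

lemma sgn4 (T M : ℝ) (h1 : 0 ≤ M) (h2 : M + 2 ≤ T) : T * (M^2 - T^2) < 0 := by
  have hs : M^2 < T^2 := by
    nlinarith [mul_pos (show (0:ℝ) < T + M by linarith) (show (0:ℝ) < T - M by linarith)]
  nlinarith [mul_pos (show (0:ℝ) < T by linarith) (show (0:ℝ) < T^2 - M^2 by linarith)]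

set_option maxHeartbeats 1000000 in
/-- For `μ ≥ 4` not divisible by `3`, `n = (μ²-7)/3` and `γ = (μ-1)(μ-2)/6`,
`δ = (μ+1)(μ+2)/6`, the generalized sign pattern of `P_{3,n} = (X-1)^3 (X+1)^n` is
`Σ_{γ,0,(μ-1)/2,(μ-1)/2,0,γ}` when `μ ≡ 1, 5 (mod 6)` and
`Σ_{γ,0,μ/2-1,0,μ/2-1,0,γ}` when `μ ≡ 2, 4 (mod 6)`. -/
theorem generalized_sign_pattern_P_three_n (μ n γ δ : ℕ) (hμ : 4 ≤ μ) (h3 : ¬(3 ∣ μ))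
    (hn : 3 * n + 7 = μ ^ 2)
    (hγ : 6 * γ = (μ - 1) * (μ - 2)) (hδ : 6 * δ = (μ + 1) * (μ + 2))
    (a : ℕ → ℝ) (ha : ∀ j, a j = ((X - 1) ^ 3 * (X + 1) ^ n : ℝ[X]).coeff j) :
    ((μ % 6 = 1 ∨ μ % 6 = 5) →
      (∀ j, δ < j → j ≤ n + 3 → 0 < a j) ∧
      a δ = 0 ∧
      (∀ j, (n + 4) / 2 ≤ j → j < δ → a j < 0) ∧
      (∀ j, γ < j → j ≤ (n + 2) / 2 → 0 < a j) ∧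
      a γ = 0 ∧
      (∀ j, j < γ → a j < 0)) ∧
    ((μ % 6 = 2 ∨ μ % 6 = 4) →
      (∀ j, δ < j → j ≤ n + 3 → 0 < a j) ∧
      a δ = 0 ∧
      (∀ j, (n + 3) / 2 < j → j < δ → a j < 0) ∧
      a ((n + 3) / 2) = 0 ∧
      (∀ j, γ < j → j < (n + 3) / 2 → 0 < a j) ∧
      a γ = 0 ∧
      (∀ j, j < γ → a j < 0)) := by
  obtain ⟨k, rfl⟩ : ∃ k, μ = k + 4 := ⟨μ - 4, by omega⟩
  -- basic arithmetic facts
  have hγ2 : 6 * γ = k*k + 5*k + 6 := by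
    rw [hγ]; have h1 : k + 4 - 1 = k + 3 := by omega
    have h2 : k + 4 - 2 = k + 2 := by omega
    rw [h1, h2]; ring
  have hδ2 : 6 * δ = k*k + 11*k + 30 := by rw [hδ]; ring
  have hn2 : 3 * n + 7 = k*k + 8*k + 16 := by rw [hn]; ring
  have e1 : 2 * γ + (k + 4) = n + 3 := by linarith
  have e2 : 2 * δ = n + 3 + (k + 4) := by linarith
  -- parity of n vs μ
  have hsq : (k+4)^2 % 2 = (k+4) % 2 := by
    rcases Nat.even_or_odd (k+4) with he | he
    · obtain ⟨c, hc⟩ := he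
      have : (k+4)^2 = 2*(c*c*2) := by rw [hc]; ring
      omega
    · obtain ⟨c, hc⟩ := he
      have : (k+4)^2 = 2*(2*c*c+2*c) + 1 := by rw [hc]; ring
      omega
  have hparn : (3*n + 7) % 2 = (k+4) % 2 := by rw [hn]; exact hsq
  -- the key identity
  have Kpos : (0:ℝ) < ((n:ℝ)+1) * ((n:ℝ)+2) * ((n:ℝ)+3) := by positivity
  have hkey : ∀ j : ℕ, ((n:ℝ)+1) * ((n:ℝ)+2) * ((n:ℝ)+3) * a j
      = ((n+3).choose j : ℝ) *
        (((n:ℝ)+3-2*j) * (((k:ℝ)+4)^2 - ((n:ℝ)+3-2*j)^2)) := by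
    intro j
    rw [ha j]
    have h := master (k+4) n hn j
    push_cast at h
    linear_combination h
  have apos : ∀ j, j ≤ n + 3 →
      (0:ℝ) < ((n:ℝ)+3-2*j) * (((k:ℝ)+4)^2 - ((n:ℝ)+3-2*j)^2) → 0 < a j := by
    intro j hj hR
    have hc : (0:ℝ) < ((n+3).choose j : ℝ) := by
      exact_mod_cast Nat.choose_pos hj
    nlinarith [hkey j, mul_pos hc hR]
  have aneg : ∀ j, j ≤ n + 3 →
      ((n:ℝ)+3-2*j) * (((k:ℝ)+4)^2 - ((n:ℝ)+3-2*j)^2) < 0 → a j < 0 := by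
    intro j hj hR
    have hc : (0:ℝ) < ((n+3).choose j : ℝ) := by
      exact_mod_cast Nat.choose_pos hj
    nlinarith [hkey j, mul_pos hc (show (0:ℝ) < -(((n:ℝ)+3-2*j) * (((k:ℝ)+4)^2 - ((n:ℝ)+3-2*j)^2)) by linarith)]
  have azero : ∀ j : ℕ, ((n:ℝ)+3-2*j) * (((k:ℝ)+4)^2 - ((n:ℝ)+3-2*j)^2) = 0 → a j = 0 := by
    intro j hR
    have h := hkey j
    rw [hR, mul_zero] at h
    exact (mul_eq_zero.mp h).resolve_left Kpos.ne'
  -- the shared pieces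
  have G1 : ∀ j, δ < j → j ≤ n + 3 → 0 < a j := by
    intro j h1 h2
    apply apos j h2
    have hb : n + k + 9 ≤ 2 * j := by omega
    have hbr : (n:ℝ) + (k:ℝ) + 9 ≤ 2 * (j:ℝ) := by exact_mod_cast hb
    exact sgn1 _ _ (by positivity) (by linarith)
  have G2 : a δ = 0 := by
    apply azero
    have hb : 2 * δ = n + k + 7 := by omega
    have hbr : 2 * (δ:ℝ) = (n:ℝ) + (k:ℝ) + 7 := by exact_mod_cast hb
    have hT : (n:ℝ)+3-2*δ = -((k:ℝ)+4) := by linarith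
    rw [hT]; ring
  have G5 : a γ = 0 := by
    apply azero
    have hb : 2 * γ + k + 4 = n + 3 := by omega
    have hbr : 2 * (γ:ℝ) + (k:ℝ) + 4 = (n:ℝ) + 3 := by exact_mod_cast hb
    have hT : (n:ℝ)+3-2*γ = (k:ℝ)+4 := by linarith
    rw [hT]; ring
  have G6 : ∀ j, j < γ → a j < 0 := by
    intro j h1
    apply aneg j (by omega)
    have hb : 2 * j + k + 6 ≤ n + 3 := by omega
    have hbr : 2 * (j:ℝ) + (k:ℝ) + 6 ≤ (n:ℝ) + 3 := by exact_mod_cast hb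
    exact sgn4 _ _ (by positivity) (by linarith)
  constructor
  · -- μ odd, n even
    intro hcase
    have hne : n % 2 = 0 := by omega
    refine ⟨G1, G2, ?_, ?_, G5, G6⟩
    · intro j h1 h2
      apply aneg j (by omega)
      have hb1 : n + 4 ≤ 2 * j := by omega
      have hb2 : 2 * j ≤ n + k + 5 := by omega
      have hbr1 : (n:ℝ) + 4 ≤ 2 * (j:ℝ) := by exact_mod_cast hb1
      have hbr2 : 2 * (j:ℝ) ≤ (n:ℝ) + (k:ℝ) + 5 := by exact_mod_cast hb2
      exact sgn2 _ _ (by linarith [Nat.cast_nonneg (α := ℝ) k]) (by linarith) (by linarith)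
    · intro j h1 h2
      apply apos j (by omega)
      have hb1 : 2 * j ≤ n + 2 := by omega
      have hb2 : n + 1 ≤ 2 * j + k := by omega
      have hbr1 : 2 * (j:ℝ) ≤ (n:ℝ) + 2 := by exact_mod_cast hb1
      have hbr2 : (n:ℝ) + 1 ≤ 2 * (j:ℝ) + (k:ℝ) := by exact_mod_cast hb2
      exact sgn3 _ _ (by linarith [Nat.cast_nonneg (α := ℝ) k]) (by linarith) (by linarith)
  · -- μ even, n odd
    intro hcase
    have hno : n % 2 = 1 := by omega
    refine ⟨G1, G2, ?_, ?_, ?_, G5, G6⟩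
    · intro j h1 h2
      apply aneg j (by omega)
      have hb1 : n + 5 ≤ 2 * j := by omega
      have hb2 : 2 * j ≤ n + k + 5 := by omega
      have hbr1 : (n:ℝ) + 5 ≤ 2 * (j:ℝ) := by exact_mod_cast hb1
      have hbr2 : 2 * (j:ℝ) ≤ (n:ℝ) + (k:ℝ) + 5 := by exact_mod_cast hb2
      exact sgn2 _ _ (by linarith [Nat.cast_nonneg (α := ℝ) k]) (by linarith) (by linarith)
    · apply azero
      have hb : 2 * ((n+3)/2) = n + 3 := by omega
      have hbr : 2 * (((n+3)/2 : ℕ) : ℝ) = (n:ℝ) + 3 := by exact_mod_cast hb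
      have hT : (n:ℝ)+3-2*(((n+3)/2 : ℕ) : ℝ) = 0 := by linarith
      rw [hT]; ring
    · intro j h1 h2
      apply apos j (by omega)
      have hb1 : 2 * j ≤ n + 1 := by omega
      have hb2 : n + 1 ≤ 2 * j + k := by omega
      have hbr1 : 2 * (j:ℝ) ≤ (n:ℝ) + 1 := by exact_mod_cast hb1
      have hbr2 : (n:ℝ) + 1 ≤ 2 * (j:ℝ) + (k:ℝ) := by exact_mod_cast hb2
      exact sgn3 _ _ (by linarith [Nat.cast_nonneg (α := ℝ) k]) (by linarith) (by linarith)
end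

section
/- Let V be a real polynomial of degree d ≥ 2 which is hyperbolic (all its roots are real, i.e., V has d real roots counted with multiplicity) and satisfies V(0) ≠ 0. Then V does not have two consecutive vanishing coefficients: there is no index j with 0 ≤ j ≤ d−1 such that the coefficients of X^j and X^{j+1} in V both vanish. -/
open Polynomial

private lemma sum_count_le {α : Type*} [DecidableEq α] (F : Finset α) (M : Multiset α) :
    ∑ x ∈ F, M.count x ≤ Multiset.card M := by
  have h1 : ∑ x ∈ F, M.count x ≤ ∑ x ∈ F ∪ M.toFinset, M.count x :=
    Finset.sum_le_sum_of_subset Finset.subset_union_left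
  have h2 : ∑ x ∈ M.toFinset, M.count x = ∑ x ∈ F ∪ M.toFinset, M.count x :=
    Finset.sum_subset Finset.subset_union_right (fun x _ hx => by
      simpa [Multiset.count_eq_zero] using hx)
  rw [← h2] at h1
  calc ∑ x ∈ F, M.count x ≤ ∑ x ∈ M.toFinset, M.count x := h1
    _ = Multiset.card M := Multiset.toFinset_sum_count_eq M

/-- Key lemma: a hyperbolic real polynomial with nonzero value at 0 has derivative whose
root multiplicity at 0 is at most 1. -/
private lemma key_lemma (R : ℝ[X]) (hR : R.roots.card = R.natDegree) (h0 : R.eval 0 ≠ 0) :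
    rootMultiplicity 0 (derivative R) ≤ 1 := by
  by_contra hm
  push_neg at hm
  have hRne : R ≠ 0 := fun h => h0 (by simp [h])
  have hR'ne : derivative R ≠ 0 := by
    intro h
    rw [h, rootMultiplicity_zero] at hm; omega
  set n := R.natDegree with hn
  set S := R.roots.toFinset with hS
  set T := (derivative R).roots.toFinset \ S with hT
  -- 0 ∈ T
  have h0root : (derivative R).IsRoot 0 := by
    exact (rootMultiplicity_pos (x := (0:ℝ)) hR'ne).mp (by omega)
  have h0T : (0 : ℝ) ∈ T := by
    rw [hT, Finset.mem_sdiff]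
    constructor
    · rw [Multiset.mem_toFinset, mem_roots hR'ne]; exact h0root
    · rw [hS, Multiset.mem_toFinset, mem_roots hRne]
      exact fun h => h0 h
  -- sum over S
  have hsumS : n - S.card ≤ ∑ x ∈ S, (derivative R).roots.count x := by
    have e1 : ∑ x ∈ S, R.roots.count x = n := by
      rw [Multiset.toFinset_sum_count_eq, hR]
    have e2 : ∑ x ∈ S, R.roots.count x = (∑ x ∈ S, (R.roots.count x - 1)) + S.card := by
      rw [Finset.card_eq_sum_ones, ← Finset.sum_add_distrib]
      refine Finset.sum_congr rfl fun x hx => ?_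
      have : 0 < R.roots.count x := Multiset.count_pos.mpr (Multiset.mem_toFinset.mp hx)
      omega
    have e3 : ∀ x ∈ S, R.roots.count x - 1 ≤ (derivative R).roots.count x := by
      intro x _
      rw [count_roots, count_roots]
      exact rootMultiplicity_sub_one_le_derivative_rootMultiplicity R x
    have := Finset.sum_le_sum e3
    omega
  -- sum over T
  have hsumT : (T.card - 1) + 2 ≤ ∑ x ∈ T, (derivative R).roots.count x := by
    rw [← Finset.add_sum_erase T _ h0T]
    have c0 : 2 ≤ (derivative R).roots.count 0 := by
      rw [count_roots]; omega
    have crest : T.card - 1 ≤ ∑ x ∈ T.erase 0, (derivative R).roots.count x := by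
      have : ∀ x ∈ T.erase 0, 1 ≤ (derivative R).roots.count x := by
        intro x hx
        have hx' : x ∈ (derivative R).roots.toFinset := by
          have := Finset.mem_of_mem_erase hx
          rw [hT, Finset.mem_sdiff] at this
          exact this.1
        exact Multiset.count_pos.mpr (Multiset.mem_toFinset.mp hx')
      calc T.card - 1 = ∑ _x ∈ T.erase 0, 1 := by
            rw [Finset.sum_const, smul_eq_mul, mul_one, Finset.card_erase_of_mem h0T]
        _ ≤ _ := Finset.sum_le_sum this
    omega
  -- card bound
  have hST : Disjoint S T := Finset.disjoint_sdiff
  have htotal : ∑ x ∈ S ∪ T, (derivative R).roots.count x ≤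
      Multiset.card (derivative R).roots :=
    sum_count_le _ _
  rw [Finset.sum_union hST] at htotal
  have hcard' : Multiset.card (derivative R).roots ≤ n - 1 := by
    calc Multiset.card (derivative R).roots ≤ (derivative R).natDegree := card_roots' _
      _ ≤ n - 1 := natDegree_derivative_le R
  have hST2 : S.card ≤ T.card + 1 :=
    R.card_roots_toFinset_le_card_roots_derivative_diff_roots_succ
  have hScard : S.card ≤ n := by
    calc S.card = R.roots.toFinset.card := rfl
      _ ≤ Multiset.card R.roots := Multiset.toFinset_card_le _
      _ = n := hR
  have hn1 : 1 ≤ n := by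
    by_contra h
    push_neg at h
    have hdeg : R.natDegree = 0 := by omega
    have : R = C (R.coeff 0) := eq_C_of_natDegree_le_zero (by omega)
    exact hR'ne (by rw [this, derivative_C])
  omega

/-- Derivative of a hyperbolic polynomial is hyperbolic, with degree one less. -/
private lemma deriv_hyp (R : ℝ[X]) (hR : R.roots.card = R.natDegree)
    (hn : 1 ≤ R.natDegree) :
    (derivative R).roots.card = (derivative R).natDegree ∧
      (derivative R).natDegree = R.natDegree - 1 := by
  have h1 : R.natDegree - 1 ≤ Multiset.card (derivative R).roots := by
    have := R.card_roots_le_derivative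
    omega
  have h2 : Multiset.card (derivative R).roots ≤ (derivative R).natDegree := card_roots' _
  have h3 : (derivative R).natDegree ≤ R.natDegree - 1 := natDegree_derivative_le R
  omega

private lemma iter_lemma (V : ℝ[X]) (hhyp : V.roots.card = V.natDegree)
    (h0 : V.eval 0 ≠ 0) :
    ∀ k ≤ V.natDegree, (derivative^[k] V).roots.card = (derivative^[k] V).natDegree ∧
      (derivative^[k] V).natDegree = V.natDegree - k ∧
      rootMultiplicity 0 (derivative^[k] V) ≤ 1 := by
  intro k
  induction k with
  | zero =>
    intro _
    refine ⟨hhyp, by simp, ?_⟩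
    simp only [Function.iterate_zero, id_eq]
    rw [rootMultiplicity_eq_zero h0]
    omega
  | succ k ih =>
    intro hk
    obtain ⟨ih1, ih2, ih3⟩ := ih (by omega)
    set R := derivative^[k] V with hR
    have hdeg : 1 ≤ R.natDegree := by omega
    have hiter : derivative^[k+1] V = derivative R := by
      rw [Function.iterate_succ_apply', hR]
    rw [hiter]
    obtain ⟨c1, c2⟩ := deriv_hyp R ih1 hdeg
    refine ⟨c1, by omega, ?_⟩
    have hRne : R ≠ 0 := fun h => by simp [h] at hdeg
    rcases Nat.lt_or_ge (rootMultiplicity 0 R) 1 with hm | hm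
    · -- mult 0 : R(0) ≠ 0
      have : ¬ R.IsRoot 0 := by
        intro h
        have := (rootMultiplicity_pos hRne).mpr h
        omega
      exact key_lemma R ih1 this
    · -- mult 1
      have hm1 : rootMultiplicity 0 R = 1 := by omega
      have hroot : R.IsRoot 0 := (rootMultiplicity_pos hRne).mp (by omega)
      rw [derivative_rootMultiplicity_of_root hroot, hm1]
      omega

/-- A hyperbolic polynomial of degree `d ≥ 2` with nonzero constant term has no two
consecutive vanishing coefficients. -/
theorem no_two_consecutive_vanishing_coeffs (V : ℝ[X]) (hd : 2 ≤ V.natDegree)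
    (hhyp : V.roots.card = V.natDegree) (h0 : V.eval 0 ≠ 0) :
    ∀ j ≤ V.natDegree - 1, ¬(V.coeff j = 0 ∧ V.coeff (j + 1) = 0) := by
  intro j hj ⟨hc0, hc1⟩
  obtain ⟨h1, h2, h3⟩ := iter_lemma V hhyp h0 j (by omega)
  set P := derivative^[j] V with hP
  have hdegP : 1 ≤ P.natDegree := by omega
  have hPne : P ≠ 0 := fun h => by simp [h] at hdegP
  have hco0 : P.coeff 0 = 0 := by
    rw [hP, coeff_iterate_derivative, zero_add, hc0]; simp
  have hco1 : P.coeff 1 = 0 := by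
    rw [hP, coeff_iterate_derivative]
    rw [show 1 + j = j + 1 by omega, hc1]; simp
  have hdvd : (X - C (0:ℝ)) ^ 2 ∣ P := by
    rw [map_zero, sub_zero, X_pow_dvd_iff]
    intro d hd2
    interval_cases d
    · exact hco0
    · exact hco1
  have : 2 ≤ rootMultiplicity 0 P := (le_rootMultiplicity_iff hPne).mpr hdvd
  omega
end

section
/- Let V be a real polynomial of degree d ≥ 2 which is hyperbolic (all its roots are real, i.e., V has d real roots counted with multiplicity) and satisfies V(0) ≠ 0, and let b_j denote the coefficient of X^j in V. If b_j = 0 for some index j (necessarily 1 ≤ j ≤ d−1), then the surrounding coefficients have opposite signs: b_{j−1} · b_{j+1} < 0. -/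
open Polynomial

/-- Iterated derivative lowers the degree by at least `k`. -/
lemma aux_natDegree_iterate_derivative_le (p : ℝ[X]) (k : ℕ) :
    (derivative^[k] p).natDegree ≤ p.natDegree - k := by
  induction k with
  | zero => simp
  | succ k ih =>
    rw [Function.iterate_succ_apply']
    calc (derivative (derivative^[k] p)).natDegree
        ≤ (derivative^[k] p).natDegree - 1 := natDegree_derivative_le _
      _ ≤ p.natDegree - (k + 1) := by omega

/-- Iterated derivatives of a hyperbolic polynomial are hyperbolic, of the expected degree. -/
lemma aux_hyper_iterate (V : ℝ[X]) (h : Multiset.card V.roots = V.natDegree)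
    (k : ℕ) (hk : k ≤ V.natDegree) :
    Multiset.card (derivative^[k] V).roots = V.natDegree - k ∧
      (derivative^[k] V).natDegree = V.natDegree - k := by
  induction k with
  | zero => simpa using h
  | succ k ih =>
    obtain ⟨hc, hn⟩ := ih (by omega)
    rw [Function.iterate_succ_apply']
    have h1 : Multiset.card (derivative^[k] V).roots
        ≤ Multiset.card (derivative (derivative^[k] V)).roots + 1 :=
      card_roots_le_derivative _
    have h2 : (derivative (derivative^[k] V)).natDegree
        ≤ (derivative^[k] V).natDegree - 1 := natDegree_derivative_le _
    have h3 : Multiset.card (derivative (derivative^[k] V)).roots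
        ≤ (derivative (derivative^[k] V)).natDegree := card_roots' _
    omega

/-- The key strict inequality `2 c₀ c₂ < c₁²` for a monic product of linear factors with
nonzero roots. -/
lemma aux_key_ineq (R : Multiset ℝ) :
    (∀ r ∈ R, r ≠ 0) → R ≠ 0 →
    2 * (((R.map fun r => X - C r).prod.coeff 0) * ((R.map fun r => X - C r).prod.coeff 2))
      < ((R.map fun r => X - C r).prod.coeff 1) ^ 2 := by
  induction R using Multiset.induction_on with
  | empty => intro _ h; exact absurd rfl h
  | cons r R ih =>
    intro hnz _
    have hr : r ≠ 0 := hnz r (Multiset.mem_cons_self r R)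
    rw [Multiset.map_cons, Multiset.prod_cons]
    set q := (R.map fun r => X - C r).prod with hq
    have e0 : ((X - C r) * q).coeff 0 = -(r * q.coeff 0) := by
      rw [sub_mul, coeff_sub, mul_coeff_zero, coeff_C_mul]
      simp
    have e1 : ((X - C r) * q).coeff 1 = q.coeff 0 - r * q.coeff 1 := by
      rw [sub_mul, coeff_sub, coeff_C_mul, coeff_X_mul]
    have e2 : ((X - C r) * q).coeff 2 = q.coeff 1 - r * q.coeff 2 := by
      rw [sub_mul, coeff_sub, coeff_C_mul]
      rw [show (2 : ℕ) = 1 + 1 from rfl, coeff_X_mul]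
    rw [e0, e1, e2]
    rcases eq_or_ne R 0 with hR | hR
    · subst hR
      simp only [Multiset.map_zero, Multiset.prod_zero, hq] at *
      simp only [coeff_one]
      norm_num
    · have hIH := ih (fun s hs => hnz s (Multiset.mem_cons_of_mem hs)) hR
      have hr2 : 0 < r ^ 2 := by positivity
      nlinarith [sq_nonneg (q.coeff 0), mul_pos hr2 (by linarith : (0:ℝ) <
        (q.coeff 1) ^ 2 - 2 * (q.coeff 0 * q.coeff 2))]

/-- Laguerre-type lemma: a hyperbolic polynomial with nonzero constant coefficient and
vanishing linear coefficient has `c₀ c₂ < 0`. -/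
lemma aux_keyB (P : ℝ[X]) (hcard : Multiset.card P.roots = P.natDegree)
    (hd : 1 ≤ P.natDegree) (h0 : P.eval 0 ≠ 0) (h1 : P.coeff 1 = 0) :
    P.coeff 0 * P.coeff 2 < 0 := by
  have hP : C P.leadingCoeff * (P.roots.map fun a => X - C a).prod = P :=
    C_leadingCoeff_mul_prod_multiset_X_sub_C hcard
  set Q := (P.roots.map fun a => X - C a).prod with hQ
  have hP0 : P ≠ 0 := fun h => h0 (by simp [h])
  have hlc : P.leadingCoeff ≠ 0 := leadingCoeff_ne_zero.mpr hP0
  have hnz : ∀ r ∈ P.roots, r ≠ 0 := by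
    intro r hr hr0
    have := isRoot_of_mem_roots hr
    rw [hr0] at this
    exact h0 this
  have hne : P.roots ≠ 0 := by
    intro h
    rw [h] at hcard
    simp at hcard
    omega
  have hkey := aux_key_ineq P.roots hnz hne
  rw [← hQ] at hkey
  have ec : ∀ n, P.coeff n = P.leadingCoeff * Q.coeff n := by
    intro n
    conv_lhs => rw [← hP]
    rw [coeff_C_mul]
  have hQ1 : Q.coeff 1 = 0 := by
    have := ec 1
    rw [h1] at this
    rcases mul_eq_zero.mp this.symm with h | h
    · exact absurd h hlc
    · exact h
  rw [hQ1] at hkey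
  norm_num at hkey
  have hQ02 : Q.coeff 0 * Q.coeff 2 < 0 := by linarith
  rw [ec 0, ec 2]
  have hlc2 : 0 < P.leadingCoeff ^ 2 := by positivity
  nlinarith [mul_pos hlc2 (neg_pos.mpr hQ02)]

/-- If a hyperbolic polynomial of degree `d ≥ 2` with nonzero constant term has a
vanishing coefficient `b_j` (`1 ≤ j ≤ d-1`), then the two surrounding coefficients have
opposite signs. -/
theorem opposite_signs_around_vanishing_coeff (V : ℝ[X]) (hd : 2 ≤ V.natDegree)
    (hhyp : V.roots.card = V.natDegree) (h0 : V.eval 0 ≠ 0)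
    (j : ℕ) (hj1 : 1 ≤ j) (hj2 : j ≤ V.natDegree - 1) (hz : V.coeff j = 0) :
    V.coeff (j - 1) * V.coeff (j + 1) < 0 := by
  induction j using Nat.strong_induction_on with
  | _ j IH =>
  have hb : V.coeff (j - 1) ≠ 0 := by
    rcases Nat.eq_or_lt_of_le hj1 with h | h
    · have : j - 1 = 0 := by omega
      rw [this, coeff_zero_eq_eval_zero]
      exact h0
    · intro hz'
      have hlt : j - 1 < j := by omega
      have := IH (j - 1) hlt (by omega) (by omega) hz'
      rw [show j - 1 + 1 = j by omega, hz] at this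
      simp at this
  set k := j - 1 with hk
  obtain ⟨hc, hn⟩ := aux_hyper_iterate V hhyp k (by omega)
  set P := derivative^[k] V with hPdef
  have hco : ∀ m, P.coeff m = ((m + k).descFactorial k : ℝ) * V.coeff (m + k) := by
    intro m
    rw [hPdef, coeff_iterate_derivative, nsmul_eq_mul]
  have hdpos : ∀ m kk : ℕ, kk ≤ m → 0 < ((m.descFactorial kk : ℕ) : ℝ) := by
    intro m kk h
    have hne : m.descFactorial kk ≠ 0 := by
      intro h0
      have := Nat.descFactorial_eq_zero_iff_lt.mp h0
      omega
    exact_mod_cast Nat.pos_of_ne_zero hne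
  have hP0 : P.coeff 0 ≠ 0 := by
    rw [hco 0]
    have hpos := hdpos (0 + k) k (by omega)
    have hb' : V.coeff (0 + k) ≠ 0 := by
      rw [show 0 + k = j - 1 by omega]; exact hb
    exact mul_ne_zero (ne_of_gt hpos) hb'
  have hP1 : P.coeff 1 = 0 := by
    rw [hco 1, show 1 + k = j by omega, hz, mul_zero]
  have hres := aux_keyB P (hc.trans hn.symm) (by rw [hn]; omega) ?_ hP1
  · rw [hco 0, hco 2, show 0 + k = j - 1 by omega, show 2 + k = j + 1 by omega] at hres
    set b0 := V.coeff (j - 1)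
    set b2 := V.coeff (j + 1)
    set c0 : ℝ := (((j - 1).descFactorial k : ℕ) : ℝ) with hc0
    set c2 : ℝ := (((j + 1).descFactorial k : ℕ) : ℝ) with hc2
    have hc0p : 0 < c0 := hdpos _ _ (by omega)
    have hc2p : 0 < c2 := hdpos _ _ (by omega)
    by_contra hge
    push_neg at hge
    have : 0 ≤ c0 * b0 * (c2 * b2) := by nlinarith [mul_pos hc0p hc2p]
    linarith
  · rw [← coeff_zero_eq_eval_zero]
    exact hP0
end

section
/- Let Q be a real polynomial of degree d ≥ 1 which is hyperbolic (all its roots are real, i.e., Q has d real roots counted with multiplicity) and satisfies Q(0) ≠ 0, and let b_j denote the coefficient of X^j in Q. Then the number of positive roots of Q, counted with multiplicity, equals the number of sign changes in the sequence of coefficients of Q after erasing the zero coefficients, i.e., it equals the number of pairs (i, j) with 0 ≤ i < j ≤ d such that b_i · b_j < 0 and b_k = 0 for all k with i < k < j. -/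
/-!
Descartes' rule of signs bounds the number of positive roots of `Q` by the number `V(Q)` of sign
changes of its coefficients, and the number of negative roots by `V(Q(-X))`. Conversely, if
`Q(0) ≠ 0` then `V(Q) + V(Q(-X)) ≤ deg Q`: two consecutive nonzero coefficients of degrees `m < d`
produce at most two sign changes in the two sequences together, and exactly one when `d = m + 1`,
so the contributions telescope to at most `deg Q`. A hyperbolic `Q` with `Q(0) ≠ 0` has `deg Q`
positive and negative roots together, so both bounds are equalities.
-/

open Polynomial

theorem sign_eq_neg_sign_iff_mul_neg {R : Type*} [Ring R] [LinearOrder R] [IsStrictOrderedRing R]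
    {a b : R} (ha : a ≠ 0) :
    SignType.sign a = -SignType.sign b ↔ a * b < 0 := by
  rcases ha.lt_or_gt with ha | ha <;> rcases lt_trichotomy b 0 with hb | hb | hb <;>
    simp [ha, hb, sign_neg, sign_pos, mul_neg_of_neg_of_pos, mul_neg_of_pos_of_neg,
      mul_pos_of_neg_of_neg, le_of_lt]

namespace Polynomial

section Ring

variable {R : Type*} [Ring R]

theorem coeff_comp_neg_X (P : R[X]) (n : ℕ) : (P.comp (-X)).coeff n = (-1) ^ n * P.coeff n := by
  rw [show (-X : R[X]) = C (-1) * X by simp, comp_C_mul_X_coeff,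
    ((Commute.neg_one_left _).pow_left n).eq]

theorem natDegree_comp_neg_X (P : R[X]) : (P.comp (-X)).natDegree = P.natDegree :=
  natDegree_eq_natDegree degree_comp_neg_X

theorem eraseLead_comp_neg_X (P : R[X]) : (P.comp (-X)).eraseLead = P.eraseLead.comp (-X) := by
  ext n
  rw [eraseLead_coeff, coeff_comp_neg_X, coeff_comp_neg_X, eraseLead_coeff, natDegree_comp_neg_X]
  split_ifs <;> simp

end Ring

section SignChangePairs

variable {R : Type*} [Semiring R] [LinearOrder R]

def signChangePairs (P : R[X]) : Set (ℕ × ℕ) :=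
  {p | p.1 < p.2 ∧ p.2 ≤ P.natDegree ∧ P.coeff p.1 * P.coeff p.2 < 0 ∧
    ∀ k, p.1 < k → k < p.2 → P.coeff k = 0}

theorem signChangePairs_finite (P : R[X]) : (signChangePairs P).Finite :=
  (Set.finite_Iic (P.natDegree, P.natDegree)).subset fun _ hp =>
    Prod.le_def.2 ⟨hp.1.le.trans hp.2.1, hp.2.1⟩

theorem mem_signChangePairs_iff_eraseLead {P : R[X]} {i j : ℕ} :
    (i, j) ∈ signChangePairs P ↔ (i, j) ∈ signChangePairs P.eraseLead ∨
      (i = P.eraseLead.natDegree ∧ j = P.natDegree ∧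
        P.eraseLead.leadingCoeff * P.leadingCoeff < 0) := by
  have hc (k : ℕ) (hk : k ≠ P.natDegree) : P.eraseLead.coeff k = P.coeff k :=
    eraseLead_coeff_of_ne k hk
  have hlt (hE : P.eraseLead ≠ 0) : P.eraseLead.natDegree < P.natDegree :=
    (eraseLead_natDegree_lt_or_eraseLead_eq_zero P).resolve_right hE
  constructor
  · rintro ⟨hij, hjd, hneg, hzero⟩
    obtain hjd | rfl := hjd.lt_or_eq
    · have hEj : P.eraseLead.coeff j ≠ 0 := by rw [hc j hjd.ne]; exact right_ne_zero_of_mul hneg.ne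
      refine .inl ⟨hij, le_natDegree_of_ne_zero hEj, by rwa [hc i (by omega), hc j hjd.ne],
        fun k hik hkj => ?_⟩
      rw [hc k (by omega)]
      exact hzero k hik hkj
    · have hEi : P.eraseLead.coeff i ≠ 0 := by rw [hc i hij.ne]; exact left_ne_zero_of_mul hneg.ne
      have hE : P.eraseLead ≠ 0 := fun h => hEi (by simp [h])
      have him : i = P.eraseLead.natDegree := by
        refine (le_natDegree_of_ne_zero hEi).antisymm (not_lt.1 fun him => ?_)
        have := hzero _ him (hlt hE)
        rw [← hc _ (hlt hE).ne] at this
        exact leadingCoeff_ne_zero.2 hE this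
      subst him
      exact .inr ⟨rfl, rfl, by rwa [leadingCoeff, hc _ hij.ne]⟩
  · rintro (⟨hij, hjm, hneg, hzero⟩ | ⟨rfl, rfl, hneg⟩)
    · have hE : P.eraseLead ≠ 0 := fun h => by simp [h] at hneg
      have hjd : j < P.natDegree := hjm.trans_lt (hlt hE)
      refine ⟨hij, hjd.le, by rwa [← hc i (by omega), ← hc j hjd.ne], fun k hik hkj => ?_⟩
      rw [← hc k (by omega)]
      exact hzero k hik hkj
    · have hE : P.eraseLead ≠ 0 := fun h => by simp [h] at hneg
      refine ⟨hlt hE, le_rfl, by rwa [← hc _ (hlt hE).ne], fun k hk hkd => ?_⟩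
      rw [← hc k hkd.ne]
      exact coeff_eq_zero_of_natDegree_lt hk

theorem ncard_signChangePairs_eraseLead (P : R[X]) :
    (signChangePairs P).ncard = (signChangePairs P.eraseLead).ncard +
      if P.eraseLead.leadingCoeff * P.leadingCoeff < 0 then 1 else 0 := by
  split_ifs with h
  · have : signChangePairs P = insert (P.eraseLead.natDegree, P.natDegree)
        (signChangePairs P.eraseLead) := by
      ext ⟨i, j⟩
      rw [Set.mem_insert_iff, mem_signChangePairs_iff_eraseLead]
      simp [h, or_comm]
    have hE : P.eraseLead ≠ 0 := fun hE => by simp [hE] at h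
    rw [this, Set.ncard_insert_of_notMem _ (signChangePairs_finite _)]
    exact fun hmem => hmem.2.1.not_gt <|
      (eraseLead_natDegree_lt_or_eraseLead_eq_zero P).resolve_right hE
  · congr 1
    ext ⟨i, j⟩
    rw [mem_signChangePairs_iff_eraseLead]
    simp [h]

end SignChangePairs

section StrictOrderedRing

variable {R : Type*} [Ring R] [LinearOrder R] [IsStrictOrderedRing R]

theorem ncard_signChangePairs (P : R[X]) : (signChangePairs P).ncard = signVariations P := by
  induction hn : P.support.card using Nat.strong_induction_on generalizing P with
  | _ n ih =>
  subst hn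
  obtain rfl | hP := eq_or_ne P 0
  · simp [signChangePairs]
  rw [ncard_signChangePairs_eraseLead, signVariations_eq_eraseLead_add_ite hP,
    ih _ (eraseLead_support_card_lt hP) _ rfl]
  simp only [sign_eq_neg_sign_iff_mul_neg (leadingCoeff_ne_zero.2 hP), mul_neg_iff]
  grind

theorem ite_mul_neg_add_ite_neg_one_pow_mul_neg_le {a b : R} (ha : a ≠ 0) (hb : b ≠ 0) {m d : ℕ}
    (hmd : m < d) :
    (if a * b < 0 then 1 else 0) + (if (-1) ^ d * a * ((-1) ^ m * b) < 0 then 1 else 0) ≤ d - m := by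
  obtain rfl | hd := eq_or_lt_of_le (Nat.succ_le_of_lt hmd)
  · have : (-1) ^ (m + 1) * a * ((-1) ^ m * b) = -(a * b) := by
      rcases neg_one_pow_eq_or R m with h | h <;> simp [pow_succ, h]
    simp only [this, neg_lt_zero]
    rcases (mul_ne_zero ha hb).lt_or_gt with h | h <;> simp [h, h.le, not_lt.2]
  · have : 2 ≤ d - m := by omega
    split_ifs <;> omega

theorem signVariations_add_signVariations_comp_neg_X_le {P : R[X]} (h0 : P.coeff 0 ≠ 0) :
    signVariations P + signVariations (P.comp (-X)) ≤ P.natDegree := by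
  induction hn : P.natDegree using Nat.strong_induction_on generalizing P with
  | _ d ih =>
  subst hn
  have hP : P ≠ 0 := fun h => h0 (by simp [h])
  obtain hd | hd := Nat.eq_zero_or_pos P.natDegree
  · rw [eq_C_of_natDegree_eq_zero hd]
    simp [← monomial_zero_left]
  have hE0 : P.eraseLead.coeff 0 ≠ 0 := by rwa [eraseLead_coeff_of_ne _ hd.ne]
  have hE : P.eraseLead ≠ 0 := fun h => hE0 (by simp [h])
  have hlt : P.eraseLead.natDegree < P.natDegree :=
    (eraseLead_natDegree_lt_or_eraseLead_eq_zero P).resolve_right hE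
  have hPX : P.comp (-X) ≠ 0 := by simpa using hP
  have ihE := ih _ hlt hE0 rfl
  rw [signVariations_eq_eraseLead_add_ite hP, signVariations_eq_eraseLead_add_ite hPX,
    eraseLead_comp_neg_X, comp_neg_X_leadingCoeff_eq, comp_neg_X_leadingCoeff_eq]
  simp only [sign_eq_neg_sign_iff_mul_neg (leadingCoeff_ne_zero.2 hP),
    sign_eq_neg_sign_iff_mul_neg (by simpa using hP : (-1) ^ P.natDegree * P.leadingCoeff ≠ 0)]
  have := ite_mul_neg_add_ite_neg_one_pow_mul_neg_le (leadingCoeff_ne_zero.2 hP)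
    (leadingCoeff_ne_zero.2 hE) hlt
  omega

end StrictOrderedRing

section CommStrictOrderedRing

variable {R : Type*} [CommRing R] [LinearOrder R] [IsStrictOrderedRing R]

theorem roots_countP_neg_le_signVariations_comp_neg_X (P : R[X]) :
    P.roots.countP (· < 0) ≤ signVariations (P.comp (-X)) := by
  have := roots_countP_pos_le_signVariations (P.comp (-X))
  rw [roots_comp_neg_X, Multiset.countP_map, ← Multiset.countP_eq_card_filter] at this
  simpa only [neg_pos] using this

theorem roots_countP_pos_add_countP_neg {P : R[X]} (h0 : P.coeff 0 ≠ 0) :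
    P.roots.countP (0 < ·) + P.roots.countP (· < 0) = P.roots.card := by
  rw [Multiset.card_eq_countP_add_countP (0 < ·)]
  refine congrArg _ (Multiset.countP_congr rfl fun x hx => ?_)
  have hx0 : x ≠ 0 := by
    rintro rfl
    exact h0 (by rw [coeff_zero_eq_eval_zero]; exact (mem_roots'.1 hx).2)
  exact propext ⟨fun h => not_lt.2 h.le, fun h => lt_of_le_of_ne (not_lt.1 h) hx0⟩

theorem roots_countP_pos_eq_signVariations {P : R[X]} (hroots : P.roots.card = P.natDegree)
    (h0 : P.coeff 0 ≠ 0) : P.roots.countP (0 < ·) = signVariations P := by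
  have hpos := roots_countP_pos_le_signVariations P
  have hneg := roots_countP_neg_le_signVariations_comp_neg_X P
  have hsplit := roots_countP_pos_add_countP_neg h0
  have hbound := signVariations_add_signVariations_comp_neg_X_le h0
  omega

end CommStrictOrderedRing

end Polynomial

theorem pos_roots_eq_sign_changes_general (Q : ℝ[X])
    (hhyp : Q.roots.card = Q.natDegree) (h0 : Q.eval 0 ≠ 0) :
    (Q.roots.filter (fun x => 0 < x)).card =
      Nat.card {p : ℕ × ℕ // p.1 < p.2 ∧ p.2 ≤ Q.natDegree ∧
        Q.coeff p.1 * Q.coeff p.2 < 0 ∧ ∀ k, p.1 < k → k < p.2 → Q.coeff k = 0} := by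
  rw [← Multiset.countP_eq_card_filter,
    roots_countP_pos_eq_signVariations hhyp (by rwa [coeff_zero_eq_eval_zero]),
    ← ncard_signChangePairs]
  rfl

/-- For a hyperbolic polynomial `Q` of degree `d ≥ 1` with `Q(0) ≠ 0`, the number of
positive roots of `Q` counted with multiplicity equals the number of sign changes in the
sequence of its coefficients after erasing the zero coefficients. -/
theorem pos_roots_eq_sign_changes (Q : ℝ[X]) (hd : 1 ≤ Q.natDegree)
    (hhyp : Q.roots.card = Q.natDegree) (h0 : Q.eval 0 ≠ 0) :
    (Q.roots.filter (fun x => 0 < x)).card =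
      Nat.card {p : ℕ × ℕ // p.1 < p.2 ∧ p.2 ≤ Q.natDegree ∧
        Q.coeff p.1 * Q.coeff p.2 < 0 ∧ ∀ k, p.1 < k → k < p.2 → Q.coeff k = 0} :=
  pos_roots_eq_sign_changes_general Q hhyp h0
end

section
/- Let m, n be natural numbers with m < n, and let a_j denote the coefficient of X^j in P_{m,n} = (X−1)^m(X+1)^n. Then: (i) for every j with 0 < j < m+n, if a_j > 0 then a_{j−1} > 0 or a_{j+1} > 0, and if a_j < 0 then a_{j−1} < 0 or a_{j+1} < 0; (ii) a_{m+n−1} > 0; (iii) a_1 and a_0 are both nonzero with sign (−1)^m, i.e., a_0 > 0 and a_1 > 0 if m is even, and a_0 < 0 and a_1 < 0 if m is odd. -/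
open Polynomial

/-- For `m < n`, in `P_{m,n} = (X-1)^m (X+1)^n`: (i) every positive (resp. negative)
coefficient has a positive (resp. negative) neighbour; (ii) `a_{m+n-1} > 0`;
(iii) `a_0` and `a_1` are nonzero of sign `(-1)^m`. -/
theorem neighbour_signs_P_m_n (m n : ℕ) (hmn : m < n)
    (a : ℕ → ℝ) (ha : ∀ j, a j = ((X - 1) ^ m * (X + 1) ^ n : ℝ[X]).coeff j) :
    (∀ j, 0 < j → j < m + n →
      (0 < a j → 0 < a (j - 1) ∨ 0 < a (j + 1)) ∧
      (a j < 0 → a (j - 1) < 0 ∨ a (j + 1) < 0)) ∧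
    0 < a (m + n - 1) ∧
    (Even m → 0 < a 0 ∧ 0 < a 1) ∧
    (Odd m → a 0 < 0 ∧ a 1 < 0) := by
  set P : ℝ[X] := (X - 1) ^ m * (X + 1) ^ n with hP
  have hQ : derivative P = C (m : ℝ) * ((X - 1) ^ (m - 1) * (X + 1) ^ n)
      + C (n : ℝ) * ((X - 1) ^ m * (X + 1) ^ (n - 1)) := by
    rw [hP, derivative_mul, derivative_pow, derivative_pow]
    simp
    ring
  have key : X ^ 2 * derivative P - derivative P
      = C ((m : ℝ) + n) * (X * P) + C ((m : ℝ) - n) * P := by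
    obtain ⟨l, rfl⟩ : ∃ l, n = l + 1 := ⟨n - 1, by omega⟩
    rcases m with _ | k
    · rw [hQ, hP]
      simp [pow_succ]
      ring
    · rw [hQ, hP]
      simp only [Nat.succ_sub_one, Nat.add_sub_cancel, pow_succ, Nat.cast_add,
        Nat.cast_one, map_add, map_one, map_sub]
      ring
  have rel : ∀ i : ℕ, ((n : ℝ) - m) * a (i + 1)
      = ((m : ℝ) + n - i) * a i + ((i : ℝ) + 2) * a (i + 2) := by
    intro i
    have h1 := congrArg (fun p => Polynomial.coeff p (i + 1)) key
    simp only [coeff_sub, coeff_add, coeff_C_mul, coeff_X_mul] at h1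
    rcases i with _ | k
    · rw [mul_comm ((X : ℝ[X]) ^ 2), coeff_mul_X_pow'] at h1
      simp only [show ¬ (2 ≤ 1) by omega, if_false] at h1
      rw [coeff_derivative] at h1
      simp only [← ha] at h1
      push_cast at h1 ⊢
      linarith
    · rw [show k + 1 + 1 = k + 2 by ring, coeff_X_pow_mul] at h1
      rw [coeff_derivative, coeff_derivative] at h1
      simp only [← ha] at h1
      push_cast at h1 ⊢
      linarith
  have hsub : (0 : ℝ) < (n : ℝ) - m := by
    have : (m : ℝ) < n := by exact_mod_cast hmn
    linarith
  have hmonic : P.Monic := by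
    have h1 : ((X : ℝ[X]) - 1).Monic := by
      simpa using monic_X_sub_C (1 : ℝ)
    have h2 : ((X : ℝ[X]) + 1).Monic := by
      simpa using monic_X_add_C (1 : ℝ)
    exact (h1.pow m).mul (h2.pow n)
  have hdeg : P.natDegree = m + n := by
    have h1 : ((X : ℝ[X]) - 1).Monic := by simpa using monic_X_sub_C (1 : ℝ)
    have h2 : ((X : ℝ[X]) + 1).Monic := by simpa using monic_X_add_C (1 : ℝ)
    have e1 : ((X : ℝ[X]) - 1).natDegree = 1 := by simpa using natDegree_X_sub_C (1 : ℝ)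
    have e2 : ((X : ℝ[X]) + 1).natDegree = 1 := by simpa using natDegree_X_add_C (1 : ℝ)
    rw [hP, (h1.pow m).natDegree_mul (h2.pow n), h1.natDegree_pow, h2.natDegree_pow, e1, e2]
    ring
  have hlead : a (m + n) = 1 := by
    rw [ha, ← hdeg]
    exact hmonic.coeff_natDegree
  have htop : a (m + n + 1) = 0 := by
    rw [ha]
    exact coeff_eq_zero_of_natDegree_lt (by rw [hdeg]; omega)
  have ha0 : a 0 = (-1 : ℝ) ^ m := by
    rw [ha, coeff_zero_eq_eval_zero, hP]
    simp
  have ha1 : a 1 = ((n : ℝ) - m) * (-1 : ℝ) ^ m := by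
    have h0 : (derivative P).coeff 0 = P.coeff 1 * ((0 : ℕ) + 1 : ℝ) := coeff_derivative P 0
    have h0' : (derivative P).coeff 0 = (m : ℝ) * (-1) ^ (m - 1) + (n : ℝ) * (-1) ^ m := by
      rw [coeff_zero_eq_eval_zero, hQ]
      simp
    have ha1' : a 1 = (m : ℝ) * (-1) ^ (m - 1) + (n : ℝ) * (-1) ^ m := by
      rw [ha]
      rw [h0] at h0'
      simpa using h0'
    rw [ha1']
    rcases m with _ | k
    · simp
    · simp only [Nat.succ_sub_one, pow_succ, Nat.cast_add, Nat.cast_one]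
      ring
  refine ⟨?_, ?_, ?_, ?_⟩
  · intro j hj0 hjmn
    obtain ⟨i, rfl⟩ : ∃ i, j = i + 1 := ⟨j - 1, by omega⟩
    have hrel := rel i
    have hc1 : (0 : ℝ) < (m : ℝ) + n - i := by
      have : (i : ℝ) < (m : ℝ) + n := by exact_mod_cast (by omega : i < m + n)
      linarith
    have hc2 : (0 : ℝ) < (i : ℝ) + 2 := by positivity
    simp only [Nat.add_sub_cancel]
    constructor
    · intro hpos
      by_contra hcon
      push_neg at hcon
      obtain ⟨h1, h2⟩ := hcon
      nlinarith
    · intro hneg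
      by_contra hcon
      push_neg at hcon
      obtain ⟨h1, h2⟩ := hcon
      nlinarith
  · obtain ⟨s, hs⟩ : ∃ s, m + n = s + 1 := ⟨m + n - 1, by omega⟩
    have hrel := rel s
    rw [show s + 1 = m + n by omega, show s + 2 = m + n + 1 by omega, hlead, htop] at hrel
    have hcast : (m : ℝ) + n = (s : ℝ) + 1 := by exact_mod_cast congrArg (Nat.cast : ℕ → ℝ) hs
    have hcs : (m : ℝ) + n - s = 1 := by linarith
    rw [hcs] at hrel
    rw [show m + n - 1 = s by omega]
    nlinarith
  · intro hm
    rw [ha0, ha1, hm.neg_one_pow]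
    constructor
    · norm_num
    · simpa using hsub
  · intro hm
    rw [ha0, ha1, hm.neg_one_pow]
    constructor
    · norm_num
    · nlinarith
end

section
/- Let m, n be natural numbers with 1 ≤ m < n, and let a_j denote the coefficient of X^j in P_{m,n} = (X−1)^m(X+1)^n. Then for every j with 1 ≤ j ≤ m+n−1, none of the following occurs for the triple of consecutive coefficients (a_{j+1}, a_j, a_{j−1}): (i) a_{j+1}·a_j < 0 and a_j·a_{j−1} < 0 (a sign triple (±,∓,±)); (ii) a_{j+1} = 0 and a_{j−1} = 0 (a triple (0,±,0)); (iii) a_{j+1} = 0 and a_j·a_{j−1} < 0 (a triple (0,±,∓)); (iv) a_{j+1}·a_j < 0 and a_{j−1} = 0 (a triple (±,∓,0)). -/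
open Polynomial

/-- The three-term recurrence on the coefficients of `(X-1)^m (X+1)^n`, coming from the
differential equation `(X^2-1) P' = ((m+n) X + (m-n)) P`. -/
lemma coeff_recurrence_P_m_n (m n : ℕ) (hm : 1 ≤ m) (hn : 1 ≤ n) (k : ℕ) :
    ((k:ℝ)+2) * ((X - 1)^m * (X + 1)^n : ℝ[X]).coeff (k+2)
      + ((m:ℝ)+(n:ℝ)-(k:ℝ)) * ((X - 1)^m * (X + 1)^n : ℝ[X]).coeff k
      = ((n:ℝ)-(m:ℝ)) * ((X - 1)^m * (X + 1)^n : ℝ[X]).coeff (k+1) := by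
  set P : ℝ[X] := (X - 1)^m * (X + 1)^n with hP
  have hid : (X^2 - 1) * derivative P = (C ((m:ℝ) + n) * X + C ((m:ℝ) - n)) * P := by
    obtain ⟨m', rfl⟩ : ∃ m', m = m' + 1 := ⟨m - 1, by omega⟩
    obtain ⟨n', rfl⟩ : ∃ n', n = n' + 1 := ⟨n - 1, by omega⟩
    rw [hP, derivative_mul, derivative_pow, derivative_pow]
    simp only [derivative_sub, derivative_add, derivative_X, derivative_one, map_add, map_sub,
      C_eq_natCast]
    push_cast
    ring
  have hco := congrArg (fun p : ℝ[X] => p.coeff (k+1)) hid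
  have hL : ((X^2 - 1) * derivative P).coeff (k+1)
      = P.coeff (k+2) * (k+2) * (-1) + P.coeff k * k := by
    rw [sub_mul, one_mul, coeff_sub, mul_comm (X^2 : ℝ[X]) (derivative P), coeff_mul_X_pow']
    rcases k with _ | k
    · rw [if_neg (by omega)]; rw [coeff_derivative]; push_cast; ring
    · simp only [show k + 1 + 1 - 2 = k by omega, if_pos (by omega : 2 ≤ k + 1 + 1),
        coeff_derivative]
      push_cast
      ring
  have hR : ((C ((m:ℝ) + n) * X + C ((m:ℝ) - n)) * P).coeff (k+1)
      = ((m:ℝ)+n) * P.coeff k + ((m:ℝ)-n) * P.coeff (k+1) := by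
    rw [add_mul, coeff_add, mul_assoc, coeff_C_mul, coeff_X_mul, coeff_C_mul]
  rw [hL, hR] at hco
  linarith

/-- For `1 ≤ m < n`, no triple of consecutive coefficients of
`P_{m,n} = (X-1)^m (X+1)^n` is of one of the forms `(±,∓,±)`, `(0,±,0)`, `(0,±,∓)`,
`(±,∓,0)`. -/
theorem impossible_triples_P_m_n (m n : ℕ) (hm : 1 ≤ m) (hmn : m < n)
    (a : ℕ → ℝ) (ha : ∀ j, a j = ((X - 1) ^ m * (X + 1) ^ n : ℝ[X]).coeff j)
    (j : ℕ) (hj1 : 1 ≤ j) (hj2 : j ≤ m + n - 1) :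
    ¬(a (j + 1) * a j < 0 ∧ a j * a (j - 1) < 0) ∧
    ¬(a (j + 1) = 0 ∧ a (j - 1) = 0) ∧
    ¬(a (j + 1) = 0 ∧ a j * a (j - 1) < 0) ∧
    ¬(a (j + 1) * a j < 0 ∧ a (j - 1) = 0) := by
  have hn : 1 ≤ n := le_of_lt (lt_of_le_of_lt hm hmn)
  -- the recurrence, phrased in terms of `a`
  have R : ∀ t : ℕ, ((t:ℝ)+2) * a (t+2) + ((m:ℝ)+(n:ℝ)-(t:ℝ)) * a t
      = ((n:ℝ)-(m:ℝ)) * a (t+1) := by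
    intro t
    rw [ha, ha, ha]
    exact coeff_recurrence_P_m_n m n hm hn t
  obtain ⟨k, rfl⟩ : ∃ k, j = k + 1 := ⟨j - 1, by omega⟩
  have hk : k ≤ m + n - 2 := by omega
  have hkR : (k:ℝ) + 2 ≤ (m:ℝ) + n := by
    have : k + 2 ≤ m + n := by omega
    exact_mod_cast this
  have hd : (0:ℝ) < (n:ℝ) - m := by
    have : (m:ℝ) < n := by exact_mod_cast hmn
    linarith
  have hc : (0:ℝ) < (m:ℝ) + n - k := by linarith
  have hk2 : (0:ℝ) < (k:ℝ) + 2 := by positivity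
  have hsimp : k + 1 - 1 = k := by omega
  rw [hsimp]
  have Rk := R k
  refine ⟨?_, ?_, ?_, ?_⟩
  · rintro ⟨h1, h2⟩
    have hRB : ((k:ℝ)+2) * (a (k+2) * a (k+1)) + ((m:ℝ)+n-k) * (a k * a (k+1))
        = ((n:ℝ)-m) * (a (k+1) * a (k+1)) := by
      linear_combination a (k+1) * Rk
    have t1 : ((k:ℝ)+2) * (a (k+2) * a (k+1)) < 0 :=
      mul_neg_of_pos_of_neg hk2 (by rw [show k + 1 + 1 = k + 2 by omega] at h1; exact h1)
    have t2 : ((m:ℝ)+n-k) * (a k * a (k+1)) < 0 :=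
      mul_neg_of_pos_of_neg hc (by rw [mul_comm]; exact h2)
    have t3 : 0 ≤ ((n:ℝ)-m) * (a (k+1) * a (k+1)) :=
      mul_nonneg hd.le (mul_self_nonneg _)
    linarith
  · rintro ⟨h1, h2⟩
    rw [show k + 1 + 1 = k + 2 by omega] at h1
    -- all three coefficients vanish
    have hB : a (k+1) = 0 := by
      have := Rk
      rw [h1, h2] at this
      have : ((n:ℝ)-m) * a (k+1) = 0 := by linarith
      rcases mul_eq_zero.mp this with h | h
      · exact absurd h (ne_of_gt hd)
      · exact h
    -- propagate zeros downward to `a 0`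
    have chain : ∀ i, i ≤ k + 1 → a (k+1-i) = 0 ∧ a (k+2-i) = 0 := by
      intro i
      induction i with
      | zero => intro _; exact ⟨hB, h1⟩
      | succ i ih =>
        intro hi
        obtain ⟨c1, c2⟩ := ih (by omega)
        have ht1 : k + 1 - i = (k - i) + 1 := by omega
        have ht2 : k + 2 - i = (k - i) + 2 := by omega
        rw [ht1] at c1
        rw [ht2] at c2
        have Rt := R (k - i)
        rw [c1, c2, mul_zero, mul_zero] at Rt
        have hle : ((k - i : ℕ) : ℝ) ≤ (k : ℝ) := by
          exact_mod_cast (by omega : (k - i : ℕ) ≤ k)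
        have hcpos : (0:ℝ) < (m:ℝ) + n - ((k - i : ℕ) : ℝ) := by linarith
        have hz : a (k - i) = 0 := by
          rcases mul_eq_zero.mp (by linarith : ((m:ℝ)+n-((k:ℕ)-i : ℕ)) * a (k-i) = 0) with h | h
          · exact absurd h (ne_of_gt hcpos)
          · exact h
        constructor
        · rw [show k + 1 - (i+1) = k - i by omega]; exact hz
        · rw [show k + 2 - (i+1) = (k - i) + 1 by omega]; exact c1
      
    have h0 : a 0 = 0 := by
      have := (chain (k+1) le_rfl).1
      rwa [Nat.sub_self] at this
    have : a 0 = (-1:ℝ)^m := by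
      rw [ha, coeff_zero_eq_eval_zero]
      simp
    rw [this] at h0
    exact pow_ne_zero m (by norm_num : (-1:ℝ) ≠ 0) h0
  · rintro ⟨h1, h2⟩
    rw [show k + 1 + 1 = k + 2 by omega] at h1
    have hRB : ((m:ℝ)+n-k) * (a k * a (k+1)) = ((n:ℝ)-m) * (a (k+1) * a (k+1)) := by
      linear_combination a (k+1) * Rk - ((k:ℝ)+2) * a (k+1) * h1
    have t2 : ((m:ℝ)+n-k) * (a k * a (k+1)) < 0 :=
      mul_neg_of_pos_of_neg hc (by rw [mul_comm]; exact h2)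
    have t3 : 0 ≤ ((n:ℝ)-m) * (a (k+1) * a (k+1)) :=
      mul_nonneg hd.le (mul_self_nonneg _)
    linarith
  · rintro ⟨h1, h2⟩
    rw [show k + 1 + 1 = k + 2 by omega] at h1
    have hRB : ((k:ℝ)+2) * (a (k+2) * a (k+1)) = ((n:ℝ)-m) * (a (k+1) * a (k+1)) := by
      linear_combination a (k+1) * Rk - ((m:ℝ)+n-k) * a (k+1) * h2
    have t1 : ((k:ℝ)+2) * (a (k+2) * a (k+1)) < 0 := mul_neg_of_pos_of_neg hk2 h1
    have t3 : 0 ≤ ((n:ℝ)-m) * (a (k+1) * a (k+1)) :=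
      mul_nonneg hd.le (mul_self_nonneg _)
    linarith
end

section
/- Let m, n be natural numbers with m < n. Then the coefficient of X² in P_{m,n} = (X−1)^m(X+1)^n vanishes if and only if there exists a natural number s ≥ 1 such that m = s(s−1)/2 and n = s(s+1)/2. (Equivalently, the coefficient of X² equals ((n−m)² − (m+n))/2, which vanishes exactly when (n−m)² = m+n.) -/
open Polynomial

lemma two_choose_two (m : ℕ) : 2 * m.choose 2 = m * (m - 1) := by
  rcases m with _ | m
  · simp
  · rw [Nat.choose_two_right]
    obtain ⟨k, hk⟩ := Nat.even_mul_succ_self m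
    simp only [Nat.succ_sub_one]
    rw [Nat.mul_comm (m+1) m, hk]
    omega

lemma cast_mul_pred (k : ℕ) : ((k * (k - 1) : ℕ) : ℤ) = (k : ℤ) * ((k : ℤ) - 1) := by
  rcases k with _ | k
  · simp
  · push_cast; ring

/-- For `m < n`, the coefficient of `X²` in `P_{m,n} = (X-1)^m (X+1)^n` vanishes if and
only if `m = s(s-1)/2` and `n = s(s+1)/2` for some natural number `s ≥ 1`. -/
theorem vanishing_coeff_x_sq_P_m_n (m n : ℕ) (hmn : m < n) :
    ((X - 1) ^ m * (X + 1) ^ n : ℝ[X]).coeff 2 = 0 ↔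
      ∃ s : ℕ, 1 ≤ s ∧ 2 * m = s * (s - 1) ∧ 2 * n = s * (s + 1) := by
  have key : ((X - 1) ^ m * (X + 1) ^ n : ℝ[X]).coeff 2 =
      (-1 : ℝ) ^ m * ((m.choose 2 : ℝ) + n.choose 2 - m * n) := by
    have h1 : ((X - 1 : ℝ[X])) = X + C (-1) := by rw [map_neg, C_1]; ring
    rw [h1, coeff_mul, Finset.Nat.sum_antidiagonal_eq_sum_range_succ_mk]
    simp only [Finset.sum_range_succ, Finset.sum_range_zero, coeff_X_add_C_pow,
      coeff_X_add_one_pow]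
    rcases m with _ | _ | m
    · simp
    · simp; ring
    · simp only [Nat.succ_sub_succ_eq_sub, Nat.sub_zero, Nat.sub_self,
        Nat.choose_zero_right, Nat.choose_one_right]
      push_cast
      ring
  rw [key, mul_eq_zero]
  have hne : ((-1 : ℝ) ^ m) ≠ 0 := by positivity
  simp only [hne, false_or]
  have hcast : ((m.choose 2 : ℝ) + n.choose 2 - m * n = 0) ↔
      (m.choose 2 + n.choose 2 : ℕ) = m * n := by
    constructor
    · intro h
      have : ((m.choose 2 + n.choose 2 : ℕ) : ℝ) = ((m * n : ℕ) : ℝ) := by push_cast; linarith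
      exact_mod_cast this
    · intro h
      have : ((m.choose 2 + n.choose 2 : ℕ) : ℝ) = ((m * n : ℕ) : ℝ) := by exact_mod_cast h
      push_cast at this ⊢; linarith
  rw [hcast]
  -- move to ℤ
  have hZ : (m.choose 2 + n.choose 2 : ℕ) = m * n ↔
      (m : ℤ) * ((m : ℤ) - 1) + (n : ℤ) * ((n : ℤ) - 1) = 2 * m * n := by
    rw [← cast_mul_pred, ← cast_mul_pred, ← two_choose_two, ← two_choose_two]
    constructor
    · intro h
      have := congrArg (Nat.cast : ℕ → ℤ) h
      push_cast at this ⊢; linarith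
    · intro h
      have : ((2 * (m.choose 2 + n.choose 2) : ℕ) : ℤ) = ((2 * (m * n) : ℕ) : ℤ) := by
        push_cast; push_cast at h; linarith
      omega
  rw [hZ]
  constructor
  · intro H
    have hsq : ((n : ℤ) - m) ^ 2 = m + n := by linear_combination H
    have h1le : 1 ≤ n - m := by omega
    refine ⟨n - m, h1le, ?_, ?_⟩
    · zify [hmn.le, h1le]
      linear_combination -hsq
    · zify [hmn.le]
      linear_combination -hsq
  · rintro ⟨s, hs, h1, h2⟩
    have h1' : (2 : ℤ) * m = s * (s - 1) := by
      rw [← cast_mul_pred]; exact_mod_cast congrArg (Nat.cast : ℕ → ℤ) h1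
    have h2' : (2 : ℤ) * n = s * (s + 1) := by exact_mod_cast congrArg (Nat.cast : ℕ → ℤ) h2
    have hba : (n : ℤ) - m = s := by nlinarith [h1', h2']
    have hab : (m : ℤ) + n = (s : ℤ) ^ 2 := by nlinarith [h1', h2']
    linear_combination ((n : ℤ) - m + s) * hba - hab
end
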